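/- arXiv:2605.04414 — 12 statements merged into one kernel-verified Lean document; each statement's English description precedes it below -/
import Mathlib

section
/- Let A be an n×n Hermitian matrix with A𝟙ₙ = 0 and let Â be the cone matrix [[0, 𝟙ₙᵀ],[𝟙ₙ, A]]. Then the quantum walk started at the conical vertex satisfies exp(-iÂt)·e₀ = (cos(√n·t), -(i/√n)·sin(√n·t)·𝟙ₙ)ᵀ for all real t. -/
/-
On the conical vertex the cone matrix acts by a two-dimensional rotation: `Â e₀ = (0, 𝟙)` and,
because `A 𝟙 = 0`, `Â (0, 𝟙) = n e₀`. Hence `Â² e₀ = n e₀`, so the even terms of the exponential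
series of `-iÂt` applied to `e₀` sum to `cos(√n t) e₀` and the odd ones to
`-(i/√n) sin(√n t) (0, 𝟙)`.
-/

open Matrix

/-- The cone `K₁ + X`: border a Hermitian matrix `A` with a new vertex joined
to all vertices with weight 1. -/
noncomputable def cone {n : ℕ} (A : Matrix (Fin n) (Fin n) ℂ) :
    Matrix (Fin (n + 1)) (Fin (n + 1)) ℂ :=
  Matrix.of fun i j =>
    Fin.cases (Fin.cases 0 (fun _ => 1) j)
      (fun i' => Fin.cases 1 (fun j' => A i' j') j) i

open NormedSpace
open scoped Nat

namespace Matrix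

variable {ι : Type*} [Fintype ι] [DecidableEq ι]

theorem hasSum_exp_mulVec (M : Matrix ι ι ℂ) (v : ι → ℂ) :
    HasSum (fun k => (k !⁻¹ : ℂ) • (M ^ k *ᵥ v)) (exp M *ᵥ v) := by
  -- `exp` depends only on the topology, so any norm inducing it gives the series expansion.
  let normedRing := Matrix.linftyOpNormedRing (n := ι) (α := ℂ)
  let normedAlgebra := Matrix.linftyOpNormedAlgebra (n := ι) (R := ℂ) (α := ℂ)
  let applyTo : Matrix ι ι ℂ →+ (ι → ℂ) :=
    { toFun := (· *ᵥ v), map_zero' := zero_mulVec v, map_add' := (add_mulVec · · v) }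
  simp_rw [← smul_mulVec]
  exact (exp_series_hasSum_exp' (𝕂 := ℂ) M).map applyTo
    (continuous_id.matrix_mulVec continuous_const)

variable {R : Type*} [CommSemiring R] {M : Matrix ι ι R} {v : ι → R} {c : R}

theorem pow_mulVec_of_mulVec_eq_smul (h : M *ᵥ v = c • v) (k : ℕ) :
    M ^ k *ᵥ v = c ^ k • v := by
  induction k with
  | zero => simp
  | succ k ih => rw [pow_succ, ← mulVec_mulVec, h, mulVec_smul, ih, smul_smul, ← pow_succ']

theorem pow_two_mul_mulVec (h : M *ᵥ (M *ᵥ v) = c • v) (k : ℕ) :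
    M ^ (2 * k) *ᵥ v = c ^ k • v := by
  rw [pow_mul]
  exact pow_mulVec_of_mulVec_eq_smul (by rwa [sq, ← mulVec_mulVec]) k

theorem pow_two_mul_add_one_mulVec (h : M *ᵥ (M *ᵥ v) = c • v) (k : ℕ) :
    M ^ (2 * k + 1) *ᵥ v = c ^ k • (M *ᵥ v) := by
  rw [pow_succ', ← mulVec_mulVec, pow_two_mul_mulVec h, mulVec_smul]

theorem exp_smul_mulVec_of_mulVec_mulVec_eq {M : Matrix ι ι ℂ} {v : ι → ℂ} {s : ℂ} (hs : s ≠ 0)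
    (h : M *ᵥ (M *ᵥ v) = s ^ 2 • v) (z : ℂ) :
    exp (z • M) *ᵥ v = Complex.cosh (z * s) • v + (Complex.sinh (z * s) / s) • (M *ᵥ v) := by
  have heven : HasSum (fun k => ((2 * k) ! : ℂ)⁻¹ • ((z • M) ^ (2 * k) *ᵥ v))
      (Complex.cosh (z * s) • v) := by
    refine (Complex.hasSum_cosh (z * s)).smul_const v |>.congr_fun fun k => ?_
    rw [smul_pow, smul_mulVec, pow_two_mul_mulVec h, smul_smul, smul_smul]
    ring_nf
  have hodd : HasSum (fun k => ((2 * k + 1) ! : ℂ)⁻¹ • ((z • M) ^ (2 * k + 1) *ᵥ v))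
      ((Complex.sinh (z * s) / s) • (M *ᵥ v)) := by
    refine ((Complex.hasSum_sinh (z * s)).div_const s).smul_const (M *ᵥ v) |>.congr_fun
      fun k => ?_
    rw [smul_pow, smul_mulVec, pow_two_mul_add_one_mulVec h, smul_smul, smul_smul]
    congr 1
    field_simp
    ring
  exact (hasSum_exp_mulVec (z • M) v).unique (heven.even_add_odd hodd)

end Matrix

section Cone

variable {n : ℕ} (A : Matrix (Fin n) (Fin n) ℂ)

theorem cone_mulVec_single_zero :
    cone A *ᵥ Pi.single 0 1 = Fin.cons 0 (fun _ => 1) := by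
  rw [mulVec_single]
  funext i
  refine Fin.cases ?_ (fun i' => ?_) i <;> simp [cone]

theorem cone_mulVec_cons_zero_one (h1 : A *ᵥ (fun _ => (1 : ℂ)) = 0) :
    cone A *ᵥ Fin.cons 0 (fun _ => 1) = (n : ℂ) • Pi.single 0 1 := by
  funext i
  refine Fin.cases ?_ (fun i' => ?_) i
  · simp [mulVec, dotProduct, Fin.sum_univ_succ, cone]
  · simpa [mulVec, dotProduct, Fin.sum_univ_succ, cone] using congrFun h1 i'

theorem cone_mulVec_cone_mulVec_single_zero (h1 : A *ᵥ (fun _ => (1 : ℂ)) = 0) :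
    cone A *ᵥ (cone A *ᵥ Pi.single 0 1) = ((Real.sqrt n : ℝ) : ℂ) ^ 2 • Pi.single 0 1 := by
  rw [cone_mulVec_single_zero, cone_mulVec_cons_zero_one A h1, ← Complex.ofReal_pow,
    Real.sq_sqrt n.cast_nonneg, Complex.ofReal_natCast]

end Cone

theorem stmt1_general {n : ℕ} (A : Matrix (Fin n) (Fin n) ℂ)
    (h1 : A *ᵥ (fun _ => (1 : ℂ)) = 0) (t : ℝ) :
    NormedSpace.exp ((-(Complex.I * (t : ℂ))) • cone A) *ᵥ Pi.single 0 1
      = (Fin.cons ((Real.cos (Real.sqrt n * t) : ℝ) : ℂ)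
          (fun _ => -(Complex.I / ((Real.sqrt n : ℝ) : ℂ)) *
            ((Real.sin (Real.sqrt n * t) : ℝ) : ℂ)) : Fin (n + 1) → ℂ) := by
  -- For `n = 0` there is no `√n` to divide by, but then the cone is the zero `1 × 1` matrix.
  obtain rfl | hn := n.eq_zero_or_pos
  · have hcone : cone A = 0 := by
      ext i j
      fin_cases i; fin_cases j; rfl
    funext i
    fin_cases i
    simp [hcone]
  have hs : ((Real.sqrt n : ℝ) : ℂ) ≠ 0 :=
    mod_cast (Real.sqrt_pos.mpr (Nat.cast_pos.mpr hn)).ne'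
  rw [exp_smul_mulVec_of_mulVec_mulVec_eq hs (cone_mulVec_cone_mulVec_single_zero A h1),
    cone_mulVec_single_zero]
  have hz : -(Complex.I * t) * ((Real.sqrt n : ℝ) : ℂ)
      = -(((Real.sqrt n * t : ℝ) : ℂ) * Complex.I) := by
    push_cast
    ring
  rw [hz, Complex.cosh_neg, Complex.sinh_neg, Complex.cosh_mul_I, Complex.sinh_mul_I]
  funext i
  refine Fin.cases ?_ (fun i' => ?_) i
  · simp
  · simp only [Pi.add_apply, Pi.smul_apply, smul_eq_mul, Pi.single_eq_of_ne (Fin.succ_ne_zero _),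
      Fin.cons_succ, mul_zero, mul_one, zero_add, Complex.ofReal_mul, Complex.ofReal_sin]
    ring

/-- the quantum walk on the cone started at the conical vertex satisfies
`exp(-iÂt)·e₀ = (cos(√n·t), -(i/√n)·sin(√n·t)·𝟙)ᵀ` for all real `t`. -/
theorem stmt1 {n : ℕ} (A : Matrix (Fin n) (Fin n) ℂ)
    (hA : A.IsHermitian)
    (h1 : A *ᵥ (fun _ => (1 : ℂ)) = 0) (t : ℝ) :
    NormedSpace.exp ((-(Complex.I * (t : ℂ))) • cone A) *ᵥ Pi.single 0 1
      = (Fin.cons ((Real.cos (Real.sqrt n * t) : ℝ) : ℂ)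
          (fun _ => -(Complex.I / ((Real.sqrt n : ℝ) : ℂ)) *
            ((Real.sin (Real.sqrt n * t) : ℝ) : ℂ)) : Fin (n + 1) → ℂ) :=
  stmt1_general A h1 t
end

section
/- Let A be an n×n Hermitian matrix with A𝟙ₙ = 0, let Â = [[0, 𝟙ₙᵀ],[𝟙ₙ, A]], and let u be any non-conical vertex. Then the amplitude at the conical vertex satisfies ⟨e₀, exp(-iÂt)·e_u⟩ = -(i/√n)·sin(√n·t) for all real t. -/
/-!
The row vector `e₀ᵀ` and the indicator `w` of the base are swapped by the cone: `e₀ᵀ Â = wᵀ`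
and, since the columns of `A` sum to zero, `wᵀ Â = n e₀ᵀ`. Hence the even powers of `Â` send
`e₀ᵀ` to multiples of `e₀ᵀ` and the odd ones to multiples of `wᵀ`, and the exponential series
splits into `e₀ᵀ exp(cÂ) = cosh(c√n) e₀ᵀ + (sinh(c√n)/√n) wᵀ`. At `c = -it` the entry at a
base vertex is `sinh(-i√n t)/√n = -(i/√n) sin(√n t)`.
-/

open Matrix

section PowOfSwap

variable {m R : Type*} [Fintype m] [DecidableEq m] [CommSemiring R]
  {B : Matrix m m R} {v w : m → R} {a : R}

theorem vecMul_pow_two_mul (hv : v ᵥ* B = w) (hw : w ᵥ* B = a • v) (k : ℕ) :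
    v ᵥ* B ^ (2 * k) = a ^ k • v := by
  induction k with
  | zero => simp
  | succ k ih =>
    rw [mul_add, mul_one, pow_add, sq, ← mul_assoc, ← vecMul_vecMul, ← vecMul_vecMul, ih,
      smul_vecMul, smul_vecMul, hv, hw, smul_smul, pow_succ]

theorem vecMul_pow_two_mul_add_one (hv : v ᵥ* B = w) (hw : w ᵥ* B = a • v) (k : ℕ) :
    v ᵥ* B ^ (2 * k + 1) = a ^ k • w := by
  rw [pow_succ, ← vecMul_vecMul, vecMul_pow_two_mul hv hw, smul_vecMul, hv]

end PowOfSwap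

theorem vecMul_exp_smul_eq_cosh_add_sinh {m : Type*} [Fintype m] [DecidableEq m]
    {B : Matrix m m ℂ} {v w : m → ℂ} {s : ℂ} (hs : s ≠ 0)
    (hv : v ᵥ* B = w) (hw : w ᵥ* B = s ^ 2 • v) (c : ℂ) :
    v ᵥ* NormedSpace.exp (c • B) =
      Complex.cosh (c * s) • v + (Complex.sinh (c * s) / s) • w := by
  -- `NormedSpace.exp` only depends on the topology, so any compatible norm can be used here.
  let _ : NormedRing (Matrix m m ℂ) := Matrix.linftyOpNormedRing
  let _ : NormedAlgebra ℂ (Matrix m m ℂ) := Matrix.linftyOpNormedAlgebra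
  let rowMul : Matrix m m ℂ →+ (m → ℂ) :=
    AddMonoidHom.mk' (v ᵥ* ·) (fun _ _ => vecMul_add _ _ v)
  have hexp := (NormedSpace.exp_series_hasSum_exp' (𝕂 := ℂ) (c • B)).map rowMul
    (continuous_const.matrix_vecMul continuous_id)
  refine hexp.unique (HasSum.even_add_odd ?_ ?_)
  · convert (Complex.hasSum_cosh (c * s)).smul_const v using 2 with k
    simp only [rowMul, Function.comp_apply, AddMonoidHom.mk'_apply, smul_pow, vecMul_smul,
      vecMul_pow_two_mul hv hw, smul_smul]
    congr 1
    ring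
  · convert ((Complex.hasSum_sinh (c * s)).div_const s).smul_const w using 2 with k
    simp only [rowMul, Function.comp_apply, AddMonoidHom.mk'_apply, smul_pow, vecMul_smul,
      vecMul_pow_two_mul_add_one hv hw, smul_smul]
    congr 1
    field_simp
    ring

theorem Matrix.IsHermitian.star_vecMul_eq_zero {m α : Type*} [Fintype m] [NonUnitalSemiring α]
    [StarRing α] {A : Matrix m m α} (hA : A.IsHermitian) {x : m → α} (hx : A *ᵥ x = 0) :
    star x ᵥ* A = 0 := by
  rw [← hA.eq, ← star_mulVec, hx, star_zero]

theorem cons_vecMul_cone {n : ℕ} (A : Matrix (Fin n) (Fin n) ℂ) (a : ℂ) (x : Fin n → ℂ) :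
    Fin.cons a x ᵥ* cone A = Fin.cons (∑ i, x i) (fun j => a + (x ᵥ* A) j) := by
  ext j
  cases j using Fin.cases <;> simp [cone, vecMul, dotProduct, Fin.sum_univ_succ]

/-- starting the quantum walk on the cone at any non-conical vertex `u`,
the amplitude at the conical vertex is `⟨e₀, exp(-iÂt)·e_u⟩ = -(i/√n)·sin(√n·t)`. -/
theorem stmt2 {n : ℕ} (A : Matrix (Fin n) (Fin n) ℂ)
    (hA : A.IsHermitian)
    (h1 : A *ᵥ (fun _ => (1 : ℂ)) = 0) (u : Fin n) (t : ℝ) :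
    (NormedSpace.exp ((-(Complex.I * (t : ℂ))) • cone A) *ᵥ Pi.single u.succ 1) 0
      = -(Complex.I / ((Real.sqrt n : ℝ) : ℂ)) * ((Real.sin (Real.sqrt n * t) : ℝ) : ℂ) := by
  set s : ℂ := ((Real.sqrt n : ℝ) : ℂ)
  have hs : s ≠ 0 := by simpa [s] using u.pos.ne'
  have hs2 : s ^ 2 = n := by simp [s, ← Complex.ofReal_pow]
  have he₀ : (Pi.single 0 1 : Fin (n + 1) → ℂ) = Fin.cons 1 0 := by
    ext j; cases j using Fin.cases <;> simp
  have hv : Pi.single 0 1 ᵥ* cone A = Fin.cons 0 1 := by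
    simp [he₀, cons_vecMul_cone, ← Pi.one_def]
  have hw : Fin.cons 0 1 ᵥ* cone A = s ^ 2 • (Pi.single 0 1 : Fin (n + 1) → ℂ) := by
    have h1A : (1 : Fin n → ℂ) ᵥ* A = 0 := by simpa using hA.star_vecMul_eq_zero (x := 1) h1
    rw [cons_vecMul_cone, h1A, hs2, he₀]
    ext j; cases j using Fin.cases <;> simp
  have hentry (M : Matrix (Fin (n + 1)) (Fin (n + 1)) ℂ) :
      (M *ᵥ Pi.single u.succ 1) 0 = (Pi.single 0 1 ᵥ* M) u.succ := by
    simp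
  have hsinh : Complex.sinh (-(Complex.I * t) * s) = -(Complex.sin (s * t) * Complex.I) := by
    rw [← Complex.sinh_mul_I, ← Complex.sinh_neg]; ring_nf
  rw [hentry, vecMul_exp_smul_eq_cosh_add_sinh hs hv hw]
  simp only [Pi.add_apply, Pi.smul_apply, Pi.single_eq_of_ne u.succ_ne_zero, Fin.cons_succ,
    Pi.one_apply, smul_eq_mul, mul_zero, mul_one, zero_add, hsinh]
  push_cast
  ring
end

section
/- If A is an n×n Hermitian matrix with A𝟙ₙ = 0 where 0 is a simple eigenvalue, then at time t₀ = (1/√n)·arccos(1/√(n+1)), the quantum walk on the cone Â started at the conical vertex has uniform mixing: the first column of the mixing matrix M(t₀) = exp(-iÂt₀) ∘ conj(exp(-iÂt₀)) equals (1/(n+1))·𝟙_{n+1}. -/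
/-!
With `w` the unit vector spread evenly over the `n` base vertices, `A𝟙 = 0` gives
`Â e₀ = √n w` and `Â w = √n e₀`, so the walk started at the apex stays in the plane
spanned by `e₀` and `w` and rotates there with angular speed `√n`:
`exp (-itÂ) e₀ = cos (√n t) e₀ - i sin (√n t) w`. At `t₀` the angle `√n t₀` has
`cos² = 1/(n+1)` and `sin² = n/(n+1)`, and the latter is shared equally by the `n`
coordinates of `w`.
-/

open Matrix

open NormedSpace Complex
open scoped Nat

section ExpMulVec

variable {ι : Type*} [Fintype ι] [DecidableEq ι]

theorem Matrix.hasSum_exp_series_mulVec (M : Matrix ι ι ℂ) (v : ι → ℂ) :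
    HasSum (fun k => ((k ! : ℂ)⁻¹ • M ^ k) *ᵥ v) (exp M *ᵥ v) := by
  let _ := Matrix.linftyOpNormedRing (n := ι) (α := ℂ)
  let _ := Matrix.linftyOpNormedAlgebra (n := ι) (R := ℂ) (α := ℂ)
  exact (exp_series_hasSum_exp' (𝕂 := ℂ) M).map (mulVec.addMonoidHomLeft v)
    (continuous_id.matrix_mulVec continuous_const)

theorem Matrix.pow_mulVec_of_mulVec_eq_smul_s3 {B : Matrix ι ι ℂ} {v w : ι → ℂ} {s : ℂ}
    (hv : B *ᵥ v = s • w) (hw : B *ᵥ w = s • v) (k : ℕ) :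
    B ^ (2 * k) *ᵥ v = s ^ (2 * k) • v ∧ B ^ (2 * k + 1) *ᵥ v = s ^ (2 * k + 1) • w := by
  induction k with
  | zero => simp [hv]
  | succ k ih =>
    have heven : B ^ (2 * (k + 1)) *ᵥ v = s ^ (2 * (k + 1)) • v := by
      rw [show 2 * (k + 1) = 2 * k + 1 + 1 by ring, pow_succ', ← mulVec_mulVec, ih.2,
        mulVec_smul, hw, smul_smul, ← pow_succ]
    refine ⟨heven, ?_⟩
    rw [pow_succ', ← mulVec_mulVec, heven, mulVec_smul, hv, smul_smul, ← pow_succ]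

theorem Matrix.exp_smul_mulVec_of_mulVec_eq_smul {B : Matrix ι ι ℂ} {v w : ι → ℂ} {s : ℂ}
    (hv : B *ᵥ v = s • w) (hw : B *ᵥ w = s • v) (θ : ℂ) :
    exp (θ • B) *ᵥ v = cosh (θ * s) • v + sinh (θ * s) • w := by
  have hterm (k : ℕ) :
      ((k ! : ℂ)⁻¹ • (θ • B) ^ k) *ᵥ v = ((k ! : ℂ)⁻¹ * θ ^ k) • (B ^ k *ᵥ v) := by
    rw [smul_pow, smul_smul, smul_mulVec]
  have heven : HasSum (fun k => (((2 * k) ! : ℂ)⁻¹ • (θ • B) ^ (2 * k)) *ᵥ v)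
      (cosh (θ * s) • v) := by
    refine ((hasSum_cosh (θ * s)).smul_const v).congr_fun fun k => ?_
    rw [hterm, (pow_mulVec_of_mulVec_eq_smul_s3 hv hw k).1, smul_smul, mul_pow]
    ring_nf
  have hodd : HasSum (fun k => (((2 * k + 1) ! : ℂ)⁻¹ • (θ • B) ^ (2 * k + 1)) *ᵥ v)
      (sinh (θ * s) • w) := by
    refine ((hasSum_sinh (θ * s)).smul_const w).congr_fun fun k => ?_
    rw [hterm, (pow_mulVec_of_mulVec_eq_smul_s3 hv hw k).2, smul_smul, mul_pow]
    ring_nf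
  exact (hasSum_exp_series_mulVec (θ • B) v).unique (heven.even_add_odd hodd)

end ExpMulVec

noncomputable def coneBaseVec (n : ℕ) : Fin (n + 1) → ℂ :=
  Fin.cons 0 fun _ => ((√n : ℝ) : ℂ)⁻¹

section Cone

variable {n : ℕ}

theorem cone_mulVec_single_zero_s3 (A : Matrix (Fin n) (Fin n) ℂ) :
    cone A *ᵥ Pi.single 0 1 = ((√n : ℝ) : ℂ) • coneBaseVec n := by
  ext i
  rw [mulVec_single_one]
  cases i using Fin.cases with
  | zero => simp [cone, coneBaseVec]
  | succ i => simp [cone, coneBaseVec, i.pos.ne']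

theorem cone_mulVec_coneBaseVec (A : Matrix (Fin n) (Fin n) ℂ) (h1 : A *ᵥ 1 = 0) :
    cone A *ᵥ coneBaseVec n = ((√n : ℝ) : ℂ) • Pi.single 0 1 := by
  ext i
  cases i using Fin.cases with
  | zero =>
    simp [mulVec, dotProduct, Fin.sum_univ_succ, cone, coneBaseVec, ← div_eq_mul_inv]
    exact_mod_cast Real.div_sqrt
  | succ i =>
    have hrow := congrFun h1 i
    simp only [mulVec, dotProduct, Pi.one_apply, mul_one, Pi.zero_apply] at hrow
    simp [mulVec, dotProduct, Fin.sum_univ_succ, cone, coneBaseVec, ← Finset.sum_mul, hrow]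

end Cone

-- For `n = 0` both sides vanish: `1 / √0 = 0` and `arccos 1 = 0`.
theorem Real.sqrt_mul_one_div_sqrt_mul_arccos (n : ℕ) :
    √n * (1 / √n * arccos (1 / √(n + 1))) = arccos (1 / √(n + 1)) := by
  rcases Nat.eq_zero_or_pos n with rfl | hn
  · simp
  · field_simp

theorem Real.cos_sq_arccos_one_div_sqrt_add_one {a : ℝ} (ha : 0 ≤ a) :
    cos (arccos (1 / √(a + 1))) ^ 2 = 1 / (a + 1) := by
  have hle : 1 / √(a + 1) ≤ 1 :=
    (div_le_one (by positivity)).mpr (one_le_sqrt.mpr (by linarith))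
  rw [cos_arccos (neg_one_lt_zero.trans_le (by positivity)).le hle, div_pow, one_pow,
    sq_sqrt (by positivity)]

theorem Real.sin_sq_arccos_one_div_sqrt_add_one {a : ℝ} (ha : 0 ≤ a) :
    sin (arccos (1 / √(a + 1))) ^ 2 = a / (a + 1) := by
  rw [sin_sq, cos_sq_arccos_one_div_sqrt_add_one ha]
  field_simp
  ring

theorem stmt3_general {n : ℕ} (A : Matrix (Fin n) (Fin n) ℂ)
    (h1 : A *ᵥ (fun _ => (1 : ℂ)) = 0) :
    ∀ j : Fin (n + 1),
      (NormedSpace.exp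
          ((-(Complex.I * (((1 / Real.sqrt n) * Real.arccos (1 / Real.sqrt (n + 1)) : ℝ) : ℂ))) •
            cone A) j 0) *
        (starRingEnd ℂ) (NormedSpace.exp
          ((-(Complex.I * (((1 / Real.sqrt n) * Real.arccos (1 / Real.sqrt (n + 1)) : ℝ) : ℂ))) •
            cone A) j 0)
      = (1 / (n + 1) : ℝ) := by
  intro j
  set x := Real.arccos (1 / √(n + 1))
  have hangle : -(I * ((1 / √n * x : ℝ) : ℂ)) * ((√n : ℝ) : ℂ) = -x * I :=
    calc _ = -((√n * (1 / √n * x) : ℝ) : ℂ) * I := by push_cast; ring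
      _ = -x * I := by rw [Real.sqrt_mul_one_div_sqrt_mul_arccos]
  have hcol := congrFun (exp_smul_mulVec_of_mulVec_eq_smul (cone_mulVec_single_zero_s3 A)
    (cone_mulVec_coneBaseVec A h1) (-(I * ((1 / √n * x : ℝ) : ℂ)))) j
  rw [mulVec_single_one, col_apply, hangle, cosh_mul_I, sinh_mul_I, cos_neg, sin_neg] at hcol
  rw [hcol, mul_conj, ofReal_inj]
  cases j using Fin.cases with
  | zero =>
    simp only [coneBaseVec, Pi.add_apply, Pi.smul_apply, Pi.single_eq_same, Fin.cons_zero,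
      smul_eq_mul, mul_one, mul_zero, add_zero]
    rw [← ofReal_cos, normSq_ofReal, ← sq,
      Real.cos_sq_arccos_one_div_sqrt_add_one (Nat.cast_nonneg n)]
  | succ i =>
    have hn : (n : ℝ) ≠ 0 := Nat.cast_ne_zero.mpr i.pos.ne'
    simp only [coneBaseVec, Pi.add_apply, Pi.smul_apply, Pi.single_eq_of_ne (Fin.succ_ne_zero i),
      Fin.cons_succ, smul_eq_mul, mul_zero, zero_add]
    rw [← ofReal_sin, normSq_mul, normSq_mul, normSq_neg, normSq_I, normSq_inv, normSq_ofReal,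
      normSq_ofReal, ← sq, Real.sin_sq_arccos_one_div_sqrt_add_one (Nat.cast_nonneg n),
      Real.mul_self_sqrt (Nat.cast_nonneg n)]
    field_simp

/-- if `A𝟙 = 0` with `0` a simple eigenvalue, then at time
`t₀ = (1/√n)·arccos(1/√(n+1))` the walk on the cone has local uniform mixing from
the conical vertex: every entry of the first column of the mixing matrix is `1/(n+1)`. -/
theorem stmt3 {n : ℕ} (A : Matrix (Fin n) (Fin n) ℂ)
    (hA : A.IsHermitian)
    (h1 : A *ᵥ (fun _ => (1 : ℂ)) = 0)
    (hsimple : ∀ v : Fin n → ℂ, A *ᵥ v = 0 → ∃ c : ℂ, v = fun _ => c) :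
    ∀ j : Fin (n + 1),
      (NormedSpace.exp
          ((-(Complex.I * (((1 / Real.sqrt n) * Real.arccos (1 / Real.sqrt (n + 1)) : ℝ) : ℂ))) •
            cone A) j 0) *
        (starRingEnd ℂ) (NormedSpace.exp
          ((-(Complex.I * (((1 / Real.sqrt n) * Real.arccos (1 / Real.sqrt (n + 1)) : ℝ) : ℂ))) •
            cone A) j 0)
      = (1 / (n + 1) : ℝ) :=
  stmt3_general A h1
end

section
/- For odd n ≥ 3, the circulant Hermitian matrix A = circ(0, -i, i, -i, i, …, -i, i) of order n (alternating -i, i off the diagonal) satisfies A𝟙ₙ = 0, and 0 is a simple eigenvalue of A. -/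
/-!
With `a` the first row, `a m + a (m - 1)` vanishes except at `m = 0` and `m = 1`; at `m = 0` this
uses that `n` is odd, so the wrap-around entry `a (n - 1)` is `i`, not `-i`. Hence adding
consecutive entries of `A v` gives `(A v)_j + (A v)_{j+1} = i (v_j - v_{j+1})`. For `v = 𝟙` the
vector `A 𝟙` is constant, equal to `c` say, and this reads `2c = 0`; if `A v = 0` it says that `v`
is invariant under the cyclic shift, hence constant.
-/

open Matrix

section Circulant
variable {G R : Type*} [AddCommGroup G] [Fintype G] [NonUnitalNonAssocSemiring R]
  {A : Matrix G G R} {a : G → R}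

theorem mulVec_apply_eq_sum_of_eq_sub (hA : ∀ j k, A j k = a (k - j)) (v : G → R) (j : G) :
    (A *ᵥ v) j = ∑ m, a m * v (j + m) := by
  simp only [mulVec, dotProduct, hA]
  exact Fintype.sum_equiv (Equiv.subRight j) _ _ fun k => by simp

theorem mulVec_add_mulVec_add_eq_sum_of_eq_sub (hA : ∀ j k, A j k = a (k - j)) (v : G → R)
    (j g : G) :
    (A *ᵥ v) j + (A *ᵥ v) (j + g) = ∑ m, (a m + a (m - g)) * v (j + m) := by
  simp only [mulVec_apply_eq_sum_of_eq_sub hA, add_mul, Finset.sum_add_distrib]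
  congr 1
  exact Fintype.sum_equiv (Equiv.addRight g) _ _ fun m => by simp [add_assoc, add_comm g]

end Circulant

theorem Fin.apply_eq_apply_zero_of_forall_add_one {α : Type*} {N : ℕ} {v : Fin (N + 1) → α}
    (h : ∀ j, v (j + 1) = v j) (j : Fin (N + 1)) : v j = v 0 :=
  Fin.induction rfl (fun i hi => by rw [← Fin.coeSucc_eq_succ, h, hi]) j

def alternatingRow {n : ℕ} [NeZero n] (m : Fin n) : ℂ :=
  if m = 0 then 0 else if (m : ℕ) % 2 = 1 then -Complex.I else Complex.I

-- Written as a difference so that it also holds for `N = 0`, where `1 = 0`.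
theorem alternatingRow_add_alternatingRow_sub_one {N : ℕ} (hodd : Odd (N + 1))
    (m : Fin (N + 1)) :
    alternatingRow m + alternatingRow (m - 1) =
      (if m = 0 then Complex.I else 0) - (if m = 1 then Complex.I else 0) := by
  obtain ⟨p, hp⟩ := hodd
  have hone : ((1 : Fin (N + 1)) : ℕ) = if N = 0 then 0 else 1 := by
    rw [Fin.val_one']; split_ifs with hN <;> simp [hN]; omega
  have hm := m.isLt
  simp only [alternatingRow, Fin.ext_iff, Fin.coe_sub_one, hone, Fin.val_zero]
  split_ifs <;> first | (exfalso; omega) | ring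

theorem mulVec_add_mulVec_add_one_of_eq_alternatingRow {N : ℕ} (hodd : Odd (N + 1))
    {A : Matrix (Fin (N + 1)) (Fin (N + 1)) ℂ} (hA : ∀ j k, A j k = alternatingRow (k - j))
    (v : Fin (N + 1) → ℂ) (j : Fin (N + 1)) :
    (A *ᵥ v) j + (A *ᵥ v) (j + 1) = Complex.I * (v j - v (j + 1)) := by
  simp [mulVec_add_mulVec_add_eq_sum_of_eq_sub hA, alternatingRow_add_alternatingRow_sub_one hodd,
    sub_mul, mul_sub, Finset.sum_sub_distrib]

theorem stmt4_general {n : ℕ} (hodd : Odd n)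
    (A : Matrix (Fin n) (Fin n) ℂ)
    (hA : ∀ j k : Fin n, A j k =
      if j = k then 0
      else if ((k - j : Fin n) : ℕ) % 2 = 1 then -Complex.I else Complex.I) :
    A *ᵥ (fun _ => (1 : ℂ)) = 0 ∧
    ∀ v : Fin n → ℂ, A *ᵥ v = 0 → ∃ c : ℂ, v = fun _ => c := by
  obtain ⟨N, rfl⟩ : ∃ N, n = N + 1 := ⟨n - 1, by have := hodd.pos; omega⟩
  have hcirc : ∀ j k, A j k = alternatingRow (k - j) := fun j k => by
    simp [hA, alternatingRow, sub_eq_zero, eq_comm]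
  have hshift := mulVec_add_mulVec_add_one_of_eq_alternatingRow hodd hcirc
  refine ⟨funext fun j => ?_, fun v hv => ⟨v 0, funext fun j => ?_⟩⟩
  · have hconst : (A *ᵥ fun _ => 1) (j + 1) = (A *ᵥ fun _ => 1) j := by
      simp [mulVec_apply_eq_sum_of_eq_sub hcirc]
    have h := hshift (fun _ => 1) j
    rw [hconst, sub_self, mul_zero] at h
    simpa using h
  · refine Fin.apply_eq_apply_zero_of_forall_add_one (fun j => ?_) j
    have h := hshift v j
    simp only [hv, Pi.zero_apply, add_zero, zero_eq_mul, Complex.I_ne_zero, false_or,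
      sub_eq_zero] at h
    exact h.symm

/-- for odd `n ≥ 3`, the circulant `circ(0, -i, i, …, -i, i)` satisfies
`A𝟙 = 0` and `0` is a simple eigenvalue. The `(j,k)` entry is `a_{(k-j) mod n}` where the
first row is `0, -i, i, -i, i, …` (entry `-i` at odd offsets, `i` at nonzero even offsets). -/
theorem stmt4 {n : ℕ} (hodd : Odd n) (hn : 3 ≤ n)
    (A : Matrix (Fin n) (Fin n) ℂ)
    (hA : ∀ j k : Fin n, A j k =
      if j = k then 0
      else if ((k - j : Fin n) : ℕ) % 2 = 1 then -Complex.I else Complex.I) :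
    A *ᵥ (fun _ => (1 : ℂ)) = 0 ∧
    ∀ v : Fin n → ℂ, A *ᵥ v = 0 → ∃ c : ℂ, v = fun _ => c :=
  stmt4_general hodd A hA
end

section
/- Let A be an n×n Hermitian matrix, and let S be the n×m normalized characteristic matrix of an equitable partition of A with quotient matrix B = SᵀAS. Then exp(-iBt) = Sᵀ exp(-iAt) S for all real t. -/
/-!
`SSᵀ` averages over the cells, and equitability (through the double count
`|V_j| r_jk = |V_k| c_jk`) makes `A` commute with it. Together with `SᵀS = 1` this gives the
intertwining `A S = S B`, hence `A^k S = S B^k` for every `k`; summing the exponential series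
termwise yields `exp(zA) S = S exp(zB)`, and multiplying by `Sᵀ` on the left gives the claim.
-/

open Matrix Finset

section Topological

variable {ι κ R X : Type*} [Ring R] [TopologicalSpace R] [IsTopologicalRing R]
  {L : SummationFilter X}

theorem HasSum.matrix_mul_right [Fintype ι] {f : X → Matrix ι ι R} {a : Matrix ι ι R}
    (hf : HasSum f a L) (S : Matrix ι κ R) : HasSum (fun x => f x * S) (a * S) L :=
  hf.map (AddMonoidHom.mk' (· * S) fun M N => Matrix.add_mul M N S)
    (continuous_id.matrix_mul continuous_const)

theorem HasSum.matrix_mul_left [Fintype κ] {f : X → Matrix κ κ R} {a : Matrix κ κ R}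
    (hf : HasSum f a L) (S : Matrix ι κ R) : HasSum (fun x => S * f x) (S * a) L :=
  hf.map (AddMonoidHom.mk' (S * ·) fun M N => Matrix.mul_add S M N)
    (continuous_const.matrix_mul continuous_id)

end Topological

namespace Matrix

variable {ι κ : Type*} [Fintype ι] [Fintype κ] [DecidableEq κ]

theorem mul_eq_mul_mul_mul_of_commute {R : Type*} [Semiring R] {A : Matrix ι ι R}
    {S : Matrix ι κ R} {T : Matrix κ ι R} (hTS : T * S = 1) (hA : Commute A (S * T)) :
    A * S = S * (T * A * S) :=
  calc A * S = A * (S * T) * S := by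
        rw [Matrix.mul_assoc, Matrix.mul_assoc, hTS, Matrix.mul_one]
    _ = S * (T * A * S) := by rw [hA.eq]; simp only [Matrix.mul_assoc]

variable [DecidableEq ι]

theorem pow_mul_eq_mul_pow_of_mul_eq {R : Type*} [Semiring R] {A : Matrix ι ι R}
    {S : Matrix ι κ R} {B : Matrix κ κ R} (h : A * S = S * B) (k : ℕ) :
    A ^ k * S = S * B ^ k := by
  induction k with
  | zero => simp
  | succ k ih =>
    rw [pow_succ', Matrix.mul_assoc, ih, ← Matrix.mul_assoc, h, pow_succ', Matrix.mul_assoc]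

variable {𝕂 : Type*} [RCLike 𝕂]

theorem exp_mul_eq_mul_exp_of_mul_eq {A : Matrix ι ι 𝕂} {S : Matrix ι κ 𝕂} {B : Matrix κ κ 𝕂}
    (h : A * S = S * B) : NormedSpace.exp A * S = S * NormedSpace.exp B := by
  have hA : HasSum (fun n => (n.factorial⁻¹ : 𝕂) • A ^ n) (NormedSpace.exp A) := by
    open scoped Norms.Operator in exact NormedSpace.exp_series_hasSum_exp' A
  have hB : HasSum (fun n => (n.factorial⁻¹ : 𝕂) • B ^ n) (NormedSpace.exp B) := by
    open scoped Norms.Operator in exact NormedSpace.exp_series_hasSum_exp' B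
  refine (hA.matrix_mul_right S).unique ((hB.matrix_mul_left S).congr_fun fun k => ?_)
  rw [Matrix.smul_mul, Matrix.mul_smul, pow_mul_eq_mul_pow_of_mul_eq h]

theorem exp_mul_mul_of_commute {A : Matrix ι ι 𝕂} {S : Matrix ι κ 𝕂} {T : Matrix κ ι 𝕂}
    (hTS : T * S = 1) (hA : Commute A (S * T)) :
    NormedSpace.exp (T * A * S) = T * NormedSpace.exp A * S := by
  rw [Matrix.mul_assoc T (NormedSpace.exp A),
    exp_mul_eq_mul_exp_of_mul_eq (mul_eq_mul_mul_mul_of_commute hTS hA), ← Matrix.mul_assoc,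
    hTS, Matrix.one_mul]

end Matrix

theorem Complex.ofReal_one_div_sqrt_mul_self (N : ℕ) :
    ((1 / Real.sqrt N : ℝ) : ℂ) * ((1 / Real.sqrt N : ℝ) : ℂ) = (N : ℂ)⁻¹ := by
  rw [← Complex.ofReal_mul, div_mul_div_comm, one_mul, Real.mul_self_sqrt N.cast_nonneg]
  push_cast
  ring

section EquitablePartition

variable {ι κ : Type*} [Fintype ι] [DecidableEq κ]

theorem card_nsmul_eq_card_nsmul_of_block_sums {R : Type*} [AddCommMonoid R]
    (A : Matrix ι ι R) (f : ι → κ) {j k : κ} {r c : R}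
    (hr : ∀ x, f x = j → ∑ y ∈ univ.filter (fun y => f y = k), A x y = r)
    (hc : ∀ y, f y = k → ∑ x ∈ univ.filter (fun x => f x = j), A x y = c) :
    #{x | f x = j} • r = #{y | f y = k} • c := by
  rw [← sum_const, ← sum_const]
  calc ∑ x ∈ univ.filter (fun x => f x = j), r
      = ∑ x ∈ univ.filter (fun x => f x = j), ∑ y ∈ univ.filter (fun y => f y = k), A x y :=
        sum_congr rfl fun x hx => (hr x (mem_filter.1 hx).2).symm
    _ = ∑ y ∈ univ.filter (fun y => f y = k), ∑ x ∈ univ.filter (fun x => f x = j), A x y :=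
        sum_comm
    _ = ∑ y ∈ univ.filter (fun y => f y = k), c :=
        sum_congr rfl fun y hy => hc y (mem_filter.1 hy).2

noncomputable def normalizedCharMatrix (f : ι → κ) : Matrix ι κ ℂ :=
  of fun x k => if f x = k then ((1 / Real.sqrt (#{y | f y = k}) : ℝ) : ℂ) else 0

variable {f : ι → κ}

theorem transpose_mul_normalizedCharMatrix (hf : Function.Surjective f) :
    (normalizedCharMatrix f)ᵀ * normalizedCharMatrix f = 1 := by
  ext j k
  simp only [normalizedCharMatrix, mul_apply, transpose_apply, of_apply, ite_mul, zero_mul]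
  rw [← sum_filter]
  by_cases hjk : j = k
  · subst hjk
    obtain ⟨x, rfl⟩ := hf j
    have hcard : (#{y | f y = f x} : ℂ) ≠ 0 := Nat.cast_ne_zero.2 (card_ne_zero.2 ⟨x, by simp⟩)
    rw [sum_congr rfl fun y hy => by rw [if_pos (mem_filter.1 hy).2], sum_const,
      Complex.ofReal_one_div_sqrt_mul_self, nsmul_eq_mul, mul_inv_cancel₀ hcard, one_apply_eq]
  · rw [one_apply_ne hjk]
    exact sum_eq_zero fun y hy => by rw [if_neg ((mem_filter.1 hy).2 ▸ hjk), mul_zero]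

variable [Fintype κ]

theorem normalizedCharMatrix_mul_transpose_apply (x y : ι) :
    (normalizedCharMatrix f * (normalizedCharMatrix f)ᵀ) x y =
      if f x = f y then (#{z | f z = f x} : ℂ)⁻¹ else 0 := by
  simp only [normalizedCharMatrix, mul_apply, transpose_apply, of_apply, ite_mul, zero_mul,
    sum_ite_eq, mem_univ, if_true]
  rcases eq_or_ne (f x) (f y) with h | h
  · rw [if_pos h.symm, if_pos h, Complex.ofReal_one_div_sqrt_mul_self]
  · rw [if_neg h.symm, if_neg h, mul_zero]

theorem commute_normalizedCharMatrix_mul_transpose {A : Matrix ι ι ℂ} {r c : κ → κ → ℂ}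
    (hr : ∀ j k, ∀ x, f x = j → ∑ y ∈ univ.filter (fun y => f y = k), A x y = r j k)
    (hc : ∀ j k, ∀ y, f y = k → ∑ x ∈ univ.filter (fun x => f x = j), A x y = c j k) :
    Commute A (normalizedCharMatrix f * (normalizedCharMatrix f)ᵀ) := by
  ext x y
  have hcard : ∀ z, (#{w | f w = f z} : ℂ) ≠ 0 := fun z =>
    Nat.cast_ne_zero.2 (card_ne_zero.2 ⟨z, by simp⟩)
  have hAP : (A * (normalizedCharMatrix f * (normalizedCharMatrix f)ᵀ)) x y =
      r (f x) (f y) * (#{w | f w = f y} : ℂ)⁻¹ := by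
    simp only [mul_apply (M := A), normalizedCharMatrix_mul_transpose_apply, mul_ite, mul_zero]
    rw [← sum_filter, sum_congr rfl fun z hz => by rw [(mem_filter.1 hz).2], ← sum_mul,
      hr _ _ x rfl]
  have hPA : (normalizedCharMatrix f * (normalizedCharMatrix f)ᵀ * A) x y =
      (#{w | f w = f x} : ℂ)⁻¹ * c (f x) (f y) := by
    simp only [mul_apply (N := A), normalizedCharMatrix_mul_transpose_apply, ite_mul, zero_mul,
      eq_comm (a := f x)]
    rw [← sum_filter, ← mul_sum, hc _ _ y rfl]
  have hrc := card_nsmul_eq_card_nsmul_of_block_sums A f (hr _ _) (hc (f x) (f y))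
  rw [nsmul_eq_mul, nsmul_eq_mul] at hrc
  rw [hAP, hPA]
  field_simp [hcard x, hcard y]
  linear_combination hrc

end EquitablePartition

theorem stmt7_general {n m : ℕ} (A : Matrix (Fin n) (Fin n) ℂ)
    (f : Fin n → Fin m) (hf : Function.Surjective f)
    (S : Matrix (Fin n) (Fin m) ℂ)
    (hS : ∀ j k, S j k =
      if f j = k then ((1 / Real.sqrt ((univ.filter fun x => f x = k).card) : ℝ) : ℂ) else 0)
    (r c : Fin m → Fin m → ℂ)
    (hr : ∀ j k, ∀ x : Fin n, f x = j → ∑ y ∈ univ.filter (fun y => f y = k), A x y = r j k)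
    (hc : ∀ j k, ∀ y : Fin n, f y = k → ∑ x ∈ univ.filter (fun x => f x = j), A x y = c j k)
    (t : ℝ) :
    NormedSpace.exp ((-(Complex.I * (t : ℂ))) • (S.transpose * A * S)) =
      S.transpose * NormedSpace.exp ((-(Complex.I * (t : ℂ))) • A) * S := by
  obtain rfl : S = normalizedCharMatrix f := Matrix.ext hS
  rw [← Matrix.smul_mul, ← Matrix.mul_smul]
  exact exp_mul_mul_of_commute (transpose_mul_normalizedCharMatrix hf)
    ((commute_normalizedCharMatrix_mul_transpose hr hc).smul_left _)

/-- for an equitable partition of a Hermitian matrix `A` with normalized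
characteristic matrix `S` and quotient `B = SᵀAS`, we have `exp(-iBt) = Sᵀ exp(-iAt) S`.
The partition is encoded by the cell-assignment map `f`. -/
theorem stmt7 {n m : ℕ} (A : Matrix (Fin n) (Fin n) ℂ) (hA : A.IsHermitian)
    (f : Fin n → Fin m) (hf : Function.Surjective f)
    (S : Matrix (Fin n) (Fin m) ℂ)
    (hS : ∀ j k, S j k =
      if f j = k then ((1 / Real.sqrt ((univ.filter fun x => f x = k).card) : ℝ) : ℂ) else 0)
    (r c : Fin m → Fin m → ℂ)
    (hr : ∀ j k, ∀ x : Fin n, f x = j → ∑ y ∈ univ.filter (fun y => f y = k), A x y = r j k)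
    (hc : ∀ j k, ∀ y : Fin n, f y = k → ∑ x ∈ univ.filter (fun x => f x = j), A x y = c j k)
    (t : ℝ) :
    NormedSpace.exp ((-(Complex.I * (t : ℂ))) • (S.transpose * A * S)) =
      S.transpose * NormedSpace.exp ((-(Complex.I * (t : ℂ))) • A) * S :=
  stmt7_general A f hf S hS r c hr hc t
end

section
/- Let A be an n×n Hermitian matrix with an equitable partition whose normalized characteristic matrix is S. If V_i = {u} and V_j = {v} are singleton cells, then ⟨e_{V_j}, exp(-iBt)·e_{V_i}⟩ = ⟨e_v, exp(-iAt)·e_u⟩ for all real t, where B = SᵀAS is the quotient matrix. -/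
/-!
Equitability (constant row sums of `A` over each pair of cells) makes the column space of the
characteristic matrix `S` invariant under `A`: `A S = S B` with `B = Sᵀ A S`. This intertwining
passes to the exponential series, `exp(cA) S = S exp(cB)`, and the columns of `S` belonging to
singleton cells are standard basis vectors, so the entry `(v, V_u)` of this identity is the claim.
-/

open Matrix Finset

open scoped Norms.Operator in
theorem Matrix.exp_mul_eq_mul_exp_of_mul_eq_mul {𝕂 n m : Type*} [RCLike 𝕂]
    [Fintype n] [DecidableEq n] [Fintype m] [DecidableEq m]
    {X : Matrix n n 𝕂} {Y : Matrix m m 𝕂} {S : Matrix n m 𝕂} (h : X * S = S * Y) :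
    NormedSpace.exp X * S = S * NormedSpace.exp Y := by
  have hpow (k : ℕ) : X ^ k * S = S * Y ^ k := by
    induction k with
    | zero => simp
    | succ k ih =>
      rw [pow_succ, pow_succ, Matrix.mul_assoc, h, ← Matrix.mul_assoc, ih, Matrix.mul_assoc]
  have hX := (NormedSpace.exp_series_hasSum_exp' (𝕂 := 𝕂) X).map (addMonoidHomMulRight S)
    (continuous_id.matrix_mul continuous_const)
  have hY := (NormedSpace.exp_series_hasSum_exp' (𝕂 := 𝕂) Y).map (addMonoidHomMulLeft S)
    (continuous_const.matrix_mul continuous_id)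
  refine hX.unique ?_
  convert hY using 1
  · funext k
    simp [Matrix.smul_mul, Matrix.mul_smul, hpow]
  · rfl

theorem Finset.filter_fiber_eq_singleton {ι κ : Type*} [Fintype ι] [DecidableEq κ]
    {f : ι → κ} {u : ι} (hu : ∀ x, f x = f u → x = u) :
    univ.filter (fun x => f x = f u) = {u} :=
  eq_singleton_iff_unique_mem.2 ⟨by simp, fun x hx => hu x (mem_filter.1 hx).2⟩

namespace Matrix

/-- With `f` sending a vertex to its cell and `w k = 1 / √|V_k|`, this is the paper's normalized
characteristic matrix `S`. -/
def cellMatrix {α n m : Type*} [Zero α] [DecidableEq m] (f : n → m) (w : m → α) : Matrix n m α :=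
  of fun x k => if f x = k then w k else 0

variable {α l n m : Type*} [CommSemiring α] [DecidableEq m] (f : n → m) (w : m → α)

@[simp]
theorem cellMatrix_apply (x : n) (k : m) : cellMatrix f w x k = if f x = k then w k else 0 := rfl

theorem mul_cellMatrix_apply [Fintype n] (M : Matrix l n α) (x : l) (k : m) :
    (M * cellMatrix f w) x k = (∑ y ∈ univ.filter (fun y => f y = k), M x y) * w k := by
  simp only [mul_apply, cellMatrix_apply, mul_ite, mul_zero, ← sum_filter, sum_mul]

theorem cellMatrix_transpose_mul_apply [Fintype n] (M : Matrix n l α) (j : m) (k : l) :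
    ((cellMatrix f w)ᵀ * M) j k = w j * ∑ x ∈ univ.filter (fun x => f x = j), M x k := by
  simp only [mul_apply, transpose_apply, cellMatrix_apply, ite_mul, zero_mul, ← sum_filter,
    mul_sum]

theorem cellMatrix_mul_apply [Fintype m] (M : Matrix m l α) (x : n) (k : l) :
    (cellMatrix f w * M) x k = w (f x) * M (f x) k := by
  simp [mul_apply]

theorem mul_cellMatrix_eq_cellMatrix_mul_quotient [Fintype n] [Fintype m] {A : Matrix n n α}
    {r : m → m → α}
    (hr : ∀ x k, ∑ y ∈ univ.filter (fun y => f y = k), A x y = r (f x) k)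
    (hw : ∀ x, w (f x) * w (f x) * #(univ.filter fun y => f y = f x) = 1) :
    A * cellMatrix f w = cellMatrix f w * ((cellMatrix f w)ᵀ * A * cellMatrix f w) := by
  have hAP (x : n) (k : m) : (A * cellMatrix f w) x k = r (f x) k * w k := by
    rw [mul_cellMatrix_apply, hr]
  ext x k
  rw [cellMatrix_mul_apply, Matrix.mul_assoc, cellMatrix_transpose_mul_apply, hAP]
  calc r (f x) k * w k
      = w (f x) * w (f x) * #(univ.filter fun y => f y = f x) * (r (f x) k * w k) := by
        rw [hw, one_mul]
    _ = w (f x) *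
          (w (f x) * ∑ y ∈ univ.filter (fun y => f y = f x), (A * cellMatrix f w) y k) := by
        rw [sum_congr rfl fun y hy => by rw [hAP, (mem_filter.1 hy).2], sum_const, nsmul_eq_mul]
        ring

end Matrix

theorem Complex.ofReal_inv_sqrt_mul_self_mul_natCast {N : ℕ} (hN : N ≠ 0) :
    ((1 / Real.sqrt N : ℝ) : ℂ) * ((1 / Real.sqrt N : ℝ) : ℂ) * N = 1 := by
  rw [← Complex.ofReal_natCast, ← Complex.ofReal_mul, ← Complex.ofReal_mul, ← Complex.ofReal_one]
  congr 1
  field_simp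
  rw [Real.sq_sqrt N.cast_nonneg]

theorem stmt8_general {n m : ℕ} (A : Matrix (Fin n) (Fin n) ℂ)
    (f : Fin n → Fin m)
    (S : Matrix (Fin n) (Fin m) ℂ)
    (hS : ∀ j k, S j k =
      if f j = k then ((1 / Real.sqrt ((univ.filter fun x => f x = k).card) : ℝ) : ℂ) else 0)
    (r : Fin m → Fin m → ℂ)
    (hr : ∀ j k, ∀ x : Fin n, f x = j → ∑ y ∈ univ.filter (fun y => f y = k), A x y = r j k)
    (u v : Fin n)
    (hu : ∀ x, f x = f u → x = u) (hv : ∀ x, f x = f v → x = v)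
    (t : ℝ) :
    (NormedSpace.exp ((-(Complex.I * (t : ℂ))) • (S.transpose * A * S))) (f v) (f u) =
      (NormedSpace.exp ((-(Complex.I * (t : ℂ))) • A)) v u := by
  set w : Fin m → ℂ := fun k => ((1 / Real.sqrt #(univ.filter fun x => f x = k) : ℝ) : ℂ)
  obtain rfl : S = cellMatrix f w := Matrix.ext hS
  have hw_singleton {x : Fin n} (hx : ∀ y, f y = f x → y = x) : w (f x) = 1 := by
    simp [w, filter_fiber_eq_singleton hx]
  have hquot := mul_cellMatrix_eq_cellMatrix_mul_quotient f w (fun x k => hr _ k x rfl)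
    fun x => Complex.ofReal_inv_sqrt_mul_self_mul_natCast (card_ne_zero.2 ⟨x, by simp⟩)
  set P := cellMatrix f w
  set c := -(Complex.I * (t : ℂ))
  have hcomm : (c • A) * P = P * (c • (Pᵀ * A * P)) := by
    rw [Matrix.smul_mul, Matrix.mul_smul, hquot]
  have hexp := congrFun₂ (exp_mul_eq_mul_exp_of_mul_eq_mul hcomm) v (f u)
  rw [mul_cellMatrix_apply, filter_fiber_eq_singleton hu, sum_singleton, hw_singleton hu,
    cellMatrix_mul_apply, hw_singleton hv] at hexp
  rwa [mul_one, one_mul, eq_comm] at hexp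

/-- for an equitable partition of a Hermitian matrix `A` with singleton cells
`V_i = {u}` and `V_j = {v}`, the walk on the quotient `B = SᵀAS` satisfies
`⟨e_{V_j}, exp(-iBt)·e_{V_i}⟩ = ⟨e_v, exp(-iAt)·e_u⟩`. -/
theorem stmt8 {n m : ℕ} (A : Matrix (Fin n) (Fin n) ℂ) (hA : A.IsHermitian)
    (f : Fin n → Fin m) (hf : Function.Surjective f)
    (S : Matrix (Fin n) (Fin m) ℂ)
    (hS : ∀ j k, S j k =
      if f j = k then ((1 / Real.sqrt ((univ.filter fun x => f x = k).card) : ℝ) : ℂ) else 0)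
    (r c : Fin m → Fin m → ℂ)
    (hr : ∀ j k, ∀ x : Fin n, f x = j → ∑ y ∈ univ.filter (fun y => f y = k), A x y = r j k)
    (hc : ∀ j k, ∀ y : Fin n, f y = k → ∑ x ∈ univ.filter (fun x => f x = j), A x y = c j k)
    (u v : Fin n)
    (hu : ∀ x, f x = f u → x = u) (hv : ∀ x, f x = f v → x = v)
    (t : ℝ) :
    (NormedSpace.exp ((-(Complex.I * (t : ℂ))) • (S.transpose * A * S))) (f v) (f u) =
      (NormedSpace.exp ((-(Complex.I * (t : ℂ))) • A)) v u :=
  stmt8_general A f S hS r hr u v hu hv t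
end

section
/- Let A be an n×n Hermitian matrix with an equitable partition π with m cells. Then the quotient matrix B = SᵀAS is Hermitian, and its (j,k)-entry equals √(|r_{jk}|·|c_{jk}|)·e^{iΘ}, where r_{jk} and c_{jk} are the constant row and column sums of A[V_j,V_k] and Θ = Arg(r_{jk}) = Arg(c_{jk}). -/
/-!
Write `V_k` for the cell `f⁻¹(k)` and `N_k = |V_k|`. Since `S` is real, `SᵀAS = SᴴAS` is Hermitian
whenever `A` is. Summing `A` over `V_j × V_k` first along rows and then along columns gives
`N_j r_{jk} = N_k c_{jk}`; the cells are nonempty, so `c_{jk}` is a positive real multiple of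
`r_{jk}`, which forces `arg r_{jk} = arg c_{jk}`. The same double sum, scaled by
`1/√(N_j N_k)`, is the entry `B_{jk} = √(N_j/N_k) r_{jk}`, and
`√(N_j/N_k) |r_{jk}| = √(|r_{jk}| |c_{jk}|)`.
-/

open Matrix Finset

section Partition

variable {ι κ : Type*} [Fintype ι] [DecidableEq κ]

abbrev cell (f : ι → κ) (k : κ) : Finset ι := univ.filter fun x => f x = k

lemma transpose_mul_mul_apply_eq_sum_cell_sum_cell {R : Type*} [CommSemiring R] {f : ι → κ}
    {S : Matrix ι κ R} {w : κ → R} (hS : ∀ x k, S x k = if f x = k then w k else 0)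
    (A : Matrix ι ι R) (j k : κ) :
    (Sᵀ * A * S) j k = w j * w k * ∑ x ∈ cell f j, ∑ y ∈ cell f k, A x y := by
  simp only [mul_apply, transpose_apply, hS, ite_mul, zero_mul, mul_ite, mul_zero,
    ← sum_filter, sum_mul, mul_sum]
  rw [sum_comm]
  refine sum_congr rfl fun x _ => sum_congr rfl fun y _ => ?_
  ring

variable {M : Type*} [AddCommMonoid M] {f : ι → κ} {A : Matrix ι ι M} {j k : κ}

lemma sum_cell_sum_cell_eq_card_smul_of_row_sum {r : M}
    (hr : ∀ x, f x = j → ∑ y ∈ cell f k, A x y = r) :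
    ∑ x ∈ cell f j, ∑ y ∈ cell f k, A x y = #(cell f j) • r := by
  rw [sum_congr rfl fun x hx => hr x (mem_filter.mp hx).2, sum_const]

lemma sum_cell_sum_cell_eq_card_smul_of_col_sum {c : M}
    (hc : ∀ y, f y = k → ∑ x ∈ cell f j, A x y = c) :
    ∑ x ∈ cell f j, ∑ y ∈ cell f k, A x y = #(cell f k) • c := by
  rw [sum_comm (f := fun x y => A x y), sum_congr rfl fun y hy => hc y (mem_filter.mp hy).2,
    sum_const]

lemma col_sum_eq_card_div_card_mul_row_sum {K : Type*} [Field K] {A : Matrix ι ι K} {r c : K}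
    (hk : (#(cell f k) : K) ≠ 0) (hr : ∀ x, f x = j → ∑ y ∈ cell f k, A x y = r)
    (hc : ∀ y, f y = k → ∑ x ∈ cell f j, A x y = c) :
    c = #(cell f j) / #(cell f k) * r := by
  have h := (sum_cell_sum_cell_eq_card_smul_of_row_sum hr).symm.trans
    (sum_cell_sum_cell_eq_card_smul_of_col_sum hc)
  rw [nsmul_eq_mul, nsmul_eq_mul] at h
  rw [div_mul_eq_mul_div, eq_div_iff hk, h, mul_comm]

end Partition

lemma Complex.ofReal_sqrt_mul_exp_arg_eq {z : ℂ} {t : ℝ} (ht : 0 < t) :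
    ((√(‖z‖ * ‖(t : ℂ) * z‖) : ℝ) : ℂ) * exp (I * (z.arg : ℂ)) = (√t : ℂ) * z := by
  have hnorm : √(‖z‖ * ‖(t : ℂ) * z‖) = √t * ‖z‖ := by
    rw [norm_mul, norm_real, Real.norm_of_nonneg ht.le, mul_left_comm,
      Real.sqrt_mul ht.le, Real.sqrt_mul_self (norm_nonneg z)]
  rw [hnorm, ofReal_mul, mul_assoc, mul_comm I, norm_mul_exp_arg_mul_I]

lemma Real.inv_sqrt_mul_inv_sqrt_mul_self {a : ℝ} (ha : 0 ≤ a) (b : ℝ) :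
    (√a)⁻¹ * (√b)⁻¹ * a = √(a / b) :=
  calc (√a)⁻¹ * (√b)⁻¹ * a = a / √a / √b := by ring
    _ = √(a / b) := by rw [Real.div_sqrt, Real.sqrt_div ha]

/-- the quotient matrix `B = SᵀAS` of an equitable partition of a Hermitian
matrix is Hermitian, its `(j,k)` entry is `√(|r_{jk}|·|c_{jk}|)·e^{iΘ}` where `r_{jk}` and
`c_{jk}` are the constant row and column sums of `A[V_j,V_k]`, and
`Θ = Arg(r_{jk}) = Arg(c_{jk})`. -/
theorem stmt9 {n m : ℕ} (A : Matrix (Fin n) (Fin n) ℂ) (hA : A.IsHermitian)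
    (f : Fin n → Fin m) (hf : Function.Surjective f)
    (S : Matrix (Fin n) (Fin m) ℂ)
    (hS : ∀ j k, S j k =
      if f j = k then ((1 / Real.sqrt ((univ.filter fun x => f x = k).card) : ℝ) : ℂ) else 0)
    (r c : Fin m → Fin m → ℂ)
    (hr : ∀ j k, ∀ x : Fin n, f x = j → ∑ y ∈ univ.filter (fun y => f y = k), A x y = r j k)
    (hc : ∀ j k, ∀ y : Fin n, f y = k → ∑ x ∈ univ.filter (fun x => f x = j), A x y = c j k) :
    (S.transpose * A * S).IsHermitian ∧
    ∀ j k : Fin m,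
      (S.transpose * A * S) j k =
        ((Real.sqrt (‖r j k‖ * ‖c j k‖) : ℝ) : ℂ) *
          Complex.exp (Complex.I * ((r j k).arg : ℂ)) ∧
      (r j k).arg = (c j k).arg := by
  have hcard : ∀ k, 0 < #(cell f k) := fun k => by
    obtain ⟨x, hx⟩ := hf k
    exact card_pos.mpr ⟨x, mem_filter.mpr ⟨mem_univ x, hx⟩⟩
  set N : Fin m → ℝ := fun k => #(cell f k)
  have hN : ∀ k, 0 < N k := fun k => Nat.cast_pos.mpr (hcard k)
  have hcr : ∀ j k, c j k = ((N j / N k : ℝ) : ℂ) * r j k := fun j k => by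
    simpa [N] using col_sum_eq_card_div_card_mul_row_sum
      (Nat.cast_ne_zero.mpr (hcard k).ne') (hr j k) (hc j k)
  have hS' : ∀ x k, S x k = if f x = k then (((√(N k))⁻¹ : ℝ) : ℂ) else 0 := by
    simpa [N] using hS
  have hSreal : Sᴴ = Sᵀ := by
    ext x k
    simp [hS', apply_ite (starRingEnd ℂ)]
  refine ⟨hSreal ▸ isHermitian_conjTranspose_mul_mul S hA, fun j k => ?_⟩
  have hpos : 0 < N j / N k := div_pos (hN j) (hN k)
  refine ⟨?_, by rw [hcr j k, Complex.arg_real_mul _ hpos]⟩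
  rw [hcr j k, Complex.ofReal_sqrt_mul_exp_arg_eq hpos,
    transpose_mul_mul_apply_eq_sum_cell_sum_cell hS' A j k,
    sum_cell_sum_cell_eq_card_smul_of_row_sum (hr j k), nsmul_eq_mul,
    ← Real.inv_sqrt_mul_inv_sqrt_mul_self (hN j).le]
  push_cast [N]
  ring
end

section
/- There is no time t at which the complete graph K_n (n ≥ 5) has uniform mixing; concretely, for n ≥ 5 there is no real t such that every entry of exp(-i·A(K_n)·t) has modulus 1/√n. -/
/-!
The adjacency matrix of `K_n` is `A = (n - 1) • P - (1 - P)` for the idempotent `P = J / n`, so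
`exp (x • A) = exp ((n - 1) x) • P + exp (-x) • (1 - P)`. At `x = -i t` every off-diagonal entry
is `(e^{-i(n-1)t} - e^{it}) / n`, of modulus at most `2 / n`, which is below `1 / √n` once `n > 4`.
-/

open Matrix NormedSpace

section Idempotent

variable {𝕂 𝔸 : Type*}

theorem IsIdempotentElem.smul_add_smul_one_sub_pow [CommSemiring 𝕂] [Ring 𝔸] [Algebra 𝕂 𝔸]
    {P : 𝔸} (hP : IsIdempotentElem P) (a b : 𝕂) (k : ℕ) :
    (a • P + b • (1 - P)) ^ k = a ^ k • P + b ^ k • (1 - P) := by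
  induction k with
  | zero => simp
  | succ k ih =>
    rw [pow_succ, ih]
    simp only [add_mul, mul_add, smul_mul_smul, hP.eq, hP.one_sub.eq, hP.mul_one_sub_self,
      hP.one_sub_mul_self, smul_zero, add_zero, zero_add, pow_succ]

theorem IsIdempotentElem.exp_smul_add_smul_one_sub [RCLike 𝕂] [Ring 𝔸] [Algebra 𝕂 𝔸]
    [TopologicalSpace 𝔸] [IsTopologicalRing 𝔸] [ContinuousSMul 𝕂 𝔸] [T2Space 𝔸]
    {P : 𝔸} (hP : IsIdempotentElem P) (a b : 𝕂) :
    exp (a • P + b • (1 - P)) = exp a • P + exp b • (1 - P) := by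
  have hsum (c : 𝕂) (Q : 𝔸) : Summable fun k : ℕ => ((k.factorial⁻¹ : 𝕂) • c ^ k) • Q :=
    (expSeries_summable' c).smul_const Q
  simp only [exp_eq_tsum 𝕂, hP.smul_add_smul_one_sub_pow, smul_add, smul_smul, ← smul_eq_mul]
  rw [(hsum a P).tsum_add (hsum b (1 - P)), (expSeries_summable' a).tsum_smul_const,
    (expSeries_summable' b).tsum_smul_const]

end Idempotent

section CompleteGraph

variable {ι : Type*} [Fintype ι]

variable (ι) in
def averagingMatrix (𝕂 : Type*) [Field 𝕂] : Matrix ι ι 𝕂 :=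
  (Fintype.card ι : 𝕂)⁻¹ • of fun _ _ => 1

variable [Nonempty ι]

theorem isIdempotentElem_averagingMatrix {𝕂 : Type*} [Field 𝕂] [CharZero 𝕂] :
    IsIdempotentElem (averagingMatrix ι 𝕂) := by
  ext i j
  simp [averagingMatrix, mul_apply]

variable [DecidableEq ι]

theorem adjMatrix_completeGraph_eq {𝕂 : Type*} [Field 𝕂] [CharZero 𝕂] :
    (SimpleGraph.completeGraph ι).adjMatrix 𝕂 =
      ((Fintype.card ι : 𝕂) - 1) • averagingMatrix ι 𝕂 + (-1 : 𝕂) • (1 - averagingMatrix ι 𝕂) := by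
  have hcard : (Fintype.card ι : 𝕂) ≠ 0 := by simp
  ext i j
  by_cases hij : i = j <;> simp [averagingMatrix, hij] <;> field_simp <;> ring

theorem exp_smul_adjMatrix_completeGraph_apply_of_ne {𝕂 : Type*} [RCLike 𝕂] (x : 𝕂) {i j : ι}
    (hij : i ≠ j) :
    exp (x • (SimpleGraph.completeGraph ι).adjMatrix 𝕂) i j =
      (exp (x * (Fintype.card ι - 1)) - exp (-x)) / Fintype.card ι := by
  rw [adjMatrix_completeGraph_eq, smul_add, smul_smul, smul_smul, mul_neg_one,
    isIdempotentElem_averagingMatrix.exp_smul_add_smul_one_sub]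
  simp [averagingMatrix, hij]
  ring

theorem norm_exp_smul_adjMatrix_completeGraph_apply_le (t : ℝ) {i j : ι} (hij : i ≠ j) :
    ‖exp (-(Complex.I * t) • (SimpleGraph.completeGraph ι).adjMatrix ℂ) i j‖ ≤
      2 / Fintype.card ι := by
  rw [exp_smul_adjMatrix_completeGraph_apply_of_ne _ hij, norm_div, Complex.norm_natCast]
  gcongr
  calc _ ≤ ‖exp (-(Complex.I * t) * (Fintype.card ι - 1))‖ + ‖exp (-(-(Complex.I * t)))‖ :=
        norm_sub_le _ _
    _ = 2 := by simp [← Complex.exp_eq_exp_ℂ, Complex.norm_exp]; norm_num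

end CompleteGraph

theorem two_div_lt_one_div_sqrt {x : ℝ} (hx : 4 < x) : 2 / x < 1 / √x := by
  have h2 : 2 < √x := (Real.lt_sqrt zero_le_two).2 (by linarith)
  have hx' : √x * √x = x := Real.mul_self_sqrt (by linarith)
  rw [div_lt_div_iff₀ (by linarith) (by linarith)]
  nlinarith

/-- for `n ≥ 5`, the complete graph `K_n` (adjacency matrix `J - I`) has no
uniform mixing: there is no real time `t` at which every entry of `exp(-iA t)` has
modulus `1/√n`. -/
theorem stmt11 (n : ℕ) (hn : 5 ≤ n) :
    ¬ ∃ t : ℝ, ∀ a b : Fin n,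
      ‖(NormedSpace.exp ((-(Complex.I * (t : ℂ))) •
        (Matrix.of fun i j : Fin n => if i = j then (0 : ℂ) else 1))) a b‖ =
      1 / Real.sqrt n := by
  rintro ⟨t, ht⟩
  have hA : (of fun i j : Fin n => if i = j then (0 : ℂ) else 1) =
      (SimpleGraph.completeGraph (Fin n)).adjMatrix ℂ := by
    ext i j
    simp
  have : Nonempty (Fin n) := ⟨⟨0, by omega⟩⟩
  have hle := norm_exp_smul_adjMatrix_completeGraph_apply_le t
    (show (⟨0, by omega⟩ : Fin n) ≠ ⟨1, by omega⟩ by simp)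
  rw [← hA, ht, Fintype.card_fin] at hle
  linarith [two_div_lt_one_div_sqrt (x := n) (by exact_mod_cast hn)]
end

section
/- The complete graph K_4 has uniform mixing at time t = π/4: every entry of exp(-i·A(K_4)·(π/4)) has modulus 1/2. -/
/-!
With `J` the all-ones matrix, `A(Kₙ) = J - 1` and `P = J / n` is idempotent, so the exponential
series of `c • P` collapses: `exp (c • P) = 1 + (exp c - 1) • P`. Since `1` commutes with `P`,
`exp (s • A) = exp (-s) • (1 + (exp (n s) - 1) • P)`. For `n = 4` and `s = -iπ/4` we get
`exp (n s) = -1`, so `exp (s • A) = exp (iπ/4) • (1 - J / 2)`, all of whose entries have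
modulus `1/2`.
-/

open Matrix Nat

namespace NormedSpace

variable {𝕂 𝔸 : Type*} [RCLike 𝕂] [NormedRing 𝔸] [NormedAlgebra 𝕂 𝔸] [CompleteSpace 𝔸]

theorem exp_smul_of_isIdempotentElem {p : 𝔸} (hp : IsIdempotentElem p) (c : 𝕂) :
    exp (c • p) = 1 + (exp c - 1) • p := by
  have hpow (n : ℕ) : (c • p) ^ n = c ^ n • p + if n = 0 then 1 - p else 0 := by
    rcases n with _ | n
    · simp
    · simp [smul_pow, hp.pow_succ_eq]
  have hsum : HasSum (fun n : ℕ => (n !⁻¹ : 𝕂) • (c • p) ^ n) (exp c • p + (1 - p)) := by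
    simp_rw [hpow, smul_add, smul_smul]
    refine ((exp_series_hasSum_exp' (𝕂 := 𝕂) c).smul_const p).add ?_
    convert hasSum_ite_eq 0 (1 - p) using 2 with n
    split_ifs <;> simp_all
  rw [(exp_series_hasSum_exp' (c • p)).unique hsum, sub_smul, one_smul]
  abel

theorem exp_smul_one_add_smul_of_isIdempotentElem {p : 𝔸} (hp : IsIdempotentElem p) (d c : 𝕂) :
    exp (d • (1 : 𝔸) + c • p) = exp d • (1 + (exp c - 1) • p) := by
  have hball (x : 𝔸) : x ∈ Metric.eball 0 (expSeries 𝕂 𝔸).radius :=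
    (expSeries_radius_eq_top 𝕂 𝔸).symm ▸ edist_lt_top _ _
  rw [← Algebra.algebraMap_eq_smul_one,
    exp_add_of_commute_of_mem_ball (Algebra.commutes d _) (hball _) (hball _),
    ← algebraMap_exp_comm, exp_smul_of_isIdempotentElem hp, ← Algebra.smul_def]

end NormedSpace

namespace Matrix

variable {n 𝕂 : Type*} [Fintype n]

theorem isIdempotentElem_inv_card_smul_of_one [Nonempty n] [DivisionRing 𝕂] [CharZero 𝕂] :
    IsIdempotentElem ((Fintype.card n : 𝕂)⁻¹ • of (1 : n → n → 𝕂)) := by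
  ext i j
  simp [mul_apply]

theorem exp_smul_one_add_smul_of_isIdempotentElem [DecidableEq n] [RCLike 𝕂] {P : Matrix n n 𝕂}
    (hP : IsIdempotentElem P) (d c : 𝕂) :
    NormedSpace.exp (d • (1 : Matrix n n 𝕂) + c • P) =
      NormedSpace.exp d • (1 + (NormedSpace.exp c - 1) • P) :=
  open scoped Norms.Operator in NormedSpace.exp_smul_one_add_smul_of_isIdempotentElem hP d c

end Matrix

open NormedSpace in
theorem SimpleGraph.exp_smul_adjMatrix_completeGraph {V 𝕂 : Type*} [Fintype V] [DecidableEq V]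
    [Nonempty V] [RCLike 𝕂] (s : 𝕂) :
    exp (s • (completeGraph V).adjMatrix 𝕂) =
      exp (-s) • (1 + (exp ((Fintype.card V : 𝕂) * s) - 1) •
        (Fintype.card V : 𝕂)⁻¹ • of (1 : V → V → 𝕂)) := by
  have hcard : (Fintype.card V : 𝕂) ≠ 0 := by simp
  have hdecomp : s • (completeGraph V).adjMatrix 𝕂 =
      (-s) • 1 + ((Fintype.card V : 𝕂) * s) • (Fintype.card V : 𝕂)⁻¹ • of (1 : V → V → 𝕂) := by
    rw [adjMatrix_completeGraph_eq_of_one_sub_one, smul_smul, mul_comm _ s, mul_assoc,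
      mul_inv_cancel₀ hcard, mul_one, smul_sub, neg_smul, sub_eq_neg_add]
  rw [hdecomp, exp_smul_one_add_smul_of_isIdempotentElem
    (isIdempotentElem_inv_card_smul_of_one (n := V) (𝕂 := 𝕂))]

/-- the complete graph `K₄` has uniform mixing at time `π/4`: every entry of
`exp(-i·A(K₄)·π/4)` has modulus `1/2`. -/
theorem stmt12 :
    ∀ a b : Fin 4,
      ‖(NormedSpace.exp ((-(Complex.I * ((Real.pi / 4 : ℝ) : ℂ))) •
        (Matrix.of fun i j : Fin 4 => if i = j then (0 : ℂ) else 1))) a b‖ = 1 / 2 := by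
  intro a b
  have hadj : (of fun i j : Fin 4 => if i = j then (0 : ℂ) else 1) =
      (SimpleGraph.completeGraph (Fin 4)).adjMatrix ℂ := by
    ext i j
    simp
  have hexp : Complex.exp (Fintype.card (Fin 4) * -(Complex.I * (Real.pi / 4 : ℝ))) = -1 := by
    rw [← Complex.exp_neg_pi_mul_I, Fintype.card_fin]
    push_cast
    ring_nf
  rw [hadj, SimpleGraph.exp_smul_adjMatrix_completeGraph, ← Complex.exp_eq_exp_ℂ, hexp]
  by_cases h : a = b <;> norm_num [h, one_apply, Complex.norm_exp]
end

section
/- The Hermitian matrix A(K₁ + K⃗₃) with rows (0,1,1,1),(1,0,-i,i),(1,i,0,-i),(1,-i,i,0) achieves uniform mixing at time t = π/(3√3): every entry of exp(-iAt) has modulus 1/2. -/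
/-!
The adjacency matrix `A` satisfies `A² = 3`, so `J = -(i/√3) A` squares to `-1` and
`ℂ → Mat₄(ℂ)`, `x + iy ↦ x + yJ` is a continuous algebra map. It commutes with `exp`, whence
`exp(-iAt) = exp((√3 t) J) = cos(√3 t) - i sin(√3 t)/√3 · A`. At `t = π/(3√3)` this is
`(1 - iA)/2`, and all entries of `1 - iA` are unimodular.
-/

open Matrix Complex

theorem NormedSpace.exp_smul_eq_cos_add_sin_smul {𝔸 : Type*} [NormedRing 𝔸] [NormedAlgebra ℝ 𝔸]
    {J : 𝔸} (hJ : J * J = -1) (θ : ℝ) :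
    NormedSpace.exp (θ • J) = Real.cos θ • 1 + Real.sin θ • J := by
  let _ : Algebra ℚ 𝔸 := Algebra.compHom 𝔸 (algebraMap ℚ ℝ)
  let φ : ℂ →ₐ[ℝ] 𝔸 := Complex.liftAux J hJ
  have hφ : ∀ z : ℂ, φ z = z.re • 1 + z.im • J := fun z => by
    simp [φ, Complex.liftAux_apply, Algebra.algebraMap_eq_smul_one]
  calc NormedSpace.exp (θ • J) = NormedSpace.exp (φ (θ * I)) := by simp [hφ]
    _ = φ (Complex.exp (θ * I)) := by
      rw [Complex.exp_eq_exp_ℂ, NormedSpace.map_exp φ φ.toLinearMap.continuous_of_finiteDimensional]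
    _ = Real.cos θ • 1 + Real.sin θ • J := by
      rw [hφ, Complex.exp_ofReal_mul_I_re, Complex.exp_ofReal_mul_I_im]

theorem NormedSpace.exp_neg_I_mul_smul_of_mul_self_eq {𝔸 : Type*} [NormedRing 𝔸]
    [NormedAlgebra ℂ 𝔸] {A : 𝔸} {c : ℝ} (hc : c ≠ 0) (hA : A * A = ((c : ℂ) ^ 2) • 1) (t : ℝ) :
    NormedSpace.exp ((-(I * t)) • A) =
      Real.cos (c * t) • 1 - (Real.sin (c * t) / c) • (I • A) := by
  have hc' : (c : ℂ) ≠ 0 := Complex.ofReal_ne_zero.mpr hc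
  set J : 𝔸 := (-(I / c)) • A
  have hJ : J * J = -1 := by
    rw [smul_mul_smul_comm, hA, smul_smul]
    field_simp
    simp
  have hJt : (-(I * t)) • A = (c * t) • J := by
    rw [← Complex.coe_smul, smul_smul]
    congr 1
    push_cast
    field_simp
  rw [hJt, NormedSpace.exp_smul_eq_cos_add_sin_smul hJ, sub_eq_add_neg, ← neg_smul]
  congr 1
  rw [← Complex.coe_smul, ← Complex.coe_smul, smul_smul, smul_smul]
  congr 1
  push_cast
  field_simp

def coneOrientedTriangleAdj : Matrix (Fin 4) (Fin 4) ℂ :=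
  !![0, 1, 1, 1; 1, 0, -I, I; 1, I, 0, -I; 1, -I, I, 0]

theorem coneOrientedTriangleAdj_mul_self :
    coneOrientedTriangleAdj * coneOrientedTriangleAdj = ((Real.sqrt 3 : ℂ) ^ 2) • 1 := by
  rw [← Complex.ofReal_pow, Real.sq_sqrt (by norm_num)]
  ext i j
  fin_cases i <;> fin_cases j <;>
    simp [coneOrientedTriangleAdj, Matrix.mul_apply, Fin.sum_univ_four] <;>
    norm_num

theorem norm_one_sub_I_smul_coneOrientedTriangleAdj (a b : Fin 4) :
    ‖(1 - I • coneOrientedTriangleAdj) a b‖ = 1 := by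
  fin_cases a <;> fin_cases b <;> simp [coneOrientedTriangleAdj]

theorem exp_coneOrientedTriangleAdj :
    NormedSpace.exp ((-(I * ((Real.pi / (3 * Real.sqrt 3) : ℝ) : ℂ))) • coneOrientedTriangleAdj) =
      (2⁻¹ : ℝ) • (1 - I • coneOrientedTriangleAdj) := by
  -- `NormedSpace.exp` does not depend on the norm, so any matrix norm will do.
  let _ : NormedRing (Matrix (Fin 4) (Fin 4) ℂ) := Matrix.linftyOpNormedRing
  let _ : NormedAlgebra ℂ (Matrix (Fin 4) (Fin 4) ℂ) := Matrix.linftyOpNormedAlgebra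
  have hct : Real.sqrt 3 * (Real.pi / (3 * Real.sqrt 3)) = Real.pi / 3 := by
    field_simp
  refine (NormedSpace.exp_neg_I_mul_smul_of_mul_self_eq (by positivity)
    coneOrientedTriangleAdj_mul_self _).trans ?_
  rw [hct, Real.cos_pi_div_three, Real.sin_pi_div_three,
    div_div_cancel_left' (by positivity), one_div, smul_sub]

/-- the cone over the oriented triangle `K₁ + K⃗₃` has uniform mixing at
time `π/(3√3)`: every entry of `exp(-iAt)` has modulus `1/2`. -/
theorem stmt14 :
    ∀ a b : Fin 4,
      ‖(NormedSpace.exp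
        ((-(Complex.I * ((Real.pi / (3 * Real.sqrt 3) : ℝ) : ℂ))) •
          !![0, 1, 1, 1; 1, 0, -I, I; 1, I, 0, -I; 1, -I, I, 0])) a b‖ = 1 / 2 := by
  intro a b
  rw [← coneOrientedTriangleAdj, exp_coneOrientedTriangleAdj, Matrix.smul_apply, norm_smul,
    norm_one_sub_I_smul_coneOrientedTriangleAdj]
  norm_num
end

section
/- For any n×n Hermitian matrix A with spectral decomposition A = Σ_r λ_r E_r (E_r the orthogonal eigenprojections), the average mixing matrix M̂ = Σ_r E_r ∘ conj(E_r) satisfies Tr(M̂) ≥ (1/n)·Σ_r m_r² ≥ 1, where m_r is the multiplicity of λ_r. -/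
open Matrix

/-- for a Hermitian matrix `A = Σ_r λ_r E_r` (spectral decomposition with
orthogonal eigenprojections `E_r` of multiplicities `m_r = Tr E_r`), the average mixing
matrix `M̂ = Σ_r E_r ∘ conj(E_r)` satisfies `Tr M̂ ≥ (1/n)·Σ_r m_r² ≥ 1`. -/
theorem stmt15 {n d : ℕ} (hn : 0 < n)
    (A : Matrix (Fin n) (Fin n) ℂ) (hA : A.IsHermitian)
    (lam : Fin d → ℝ) (hlam : Function.Injective lam)
    (E : Fin d → Matrix (Fin n) (Fin n) ℂ)
    (hEP : ∀ r, E r * E r = E r) (hEH : ∀ r, (E r).IsHermitian)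
    (hEO : ∀ r s, r ≠ s → E r * E s = 0)
    (hEsum : ∑ r, E r = 1)
    (hspec : A = ∑ r, (lam r : ℂ) • E r)
    (m : Fin d → ℕ) (hm : ∀ r, (E r).trace = (m r : ℂ)) :
    (1 : ℝ) ≤ (1 / n) * ∑ r, (m r : ℝ) ^ 2 ∧
    (1 / n) * ∑ r, (m r : ℝ) ^ 2 ≤
      (∑ r, Matrix.hadamard (E r) ((E r).map (starRingEnd ℂ))).trace.re := by
  have hnR : (0 : ℝ) < n := by exact_mod_cast hn
  -- sum of multiplicities equals n
  have hsum : ∑ r, (m r : ℝ) = n := by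
    have := congrArg Matrix.trace hEsum
    rw [Matrix.trace_sum, Matrix.trace_one] at this
    simp only [hm] at this
    have : ((∑ r, (m r : ℝ) : ℝ) : ℂ) = ((n : ℝ) : ℂ) := by push_cast at this ⊢; simpa using this
    exact_mod_cast this
  constructor
  · rw [one_div, inv_mul_eq_div, le_div_iff₀ hnR, one_mul]
    calc (n : ℝ) = ∑ r, (m r : ℝ) := hsum.symm
      _ ≤ ∑ r, (m r : ℝ) ^ 2 := by
          refine Finset.sum_le_sum fun r _ => ?_
          have : m r ≤ m r ^ 2 := Nat.le_self_pow (by norm_num) _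
          exact_mod_cast this
  · rw [Matrix.trace_sum, Complex.re_sum, Finset.mul_sum]
    refine Finset.sum_le_sum fun r _ => ?_
    -- trace of hadamard term
    have htr : ((Matrix.hadamard (E r) ((E r).map (starRingEnd ℂ))).trace).re
        = ∑ i, Complex.normSq (E r i i) := by
      rw [Matrix.trace, Complex.re_sum]
      refine Finset.sum_congr rfl fun i _ => ?_
      simp [Matrix.diag, Matrix.hadamard, Complex.mul_conj, Matrix.map_apply]
    rw [htr]
    have hdiagsum : ∑ i, (E r i i).re = (m r : ℝ) := by
      have := hm r
      rw [Matrix.trace] at this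
      have := congrArg Complex.re this
      simpa [Complex.re_sum, Matrix.diag] using this
    have hcs : (∑ i, (E r i i).re) ^ 2 ≤ (n : ℝ) * ∑ i, (E r i i).re ^ 2 := by
      simpa using sq_sum_le_card_mul_sum_sq (s := Finset.univ)
        (f := fun i => (E r i i).re)
    rw [hdiagsum] at hcs
    have h2 : ∑ i, (E r i i).re ^ 2 ≤ ∑ i, Complex.normSq (E r i i) := by
      refine Finset.sum_le_sum fun i _ => ?_
      rw [Complex.normSq_apply]
      nlinarith [sq_nonneg (E r i i).im]
    rw [one_div, inv_mul_eq_div, div_le_iff₀ hnR]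
    calc (m r : ℝ) ^ 2 ≤ (n : ℝ) * ∑ i, (E r i i).re ^ 2 := hcs
      _ ≤ (n : ℝ) * ∑ i, Complex.normSq (E r i i) := by
          exact mul_le_mul_of_nonneg_left h2 hnR.le
      _ = (∑ i, Complex.normSq (E r i i)) * n := by ring
end

section
/- Let A be an n×n Hermitian circulant matrix (commuting with the cyclic shift) with n distinct eigenvalues. Then its average mixing matrix equals (1/n)·J_n: Σ_r E_r ∘ conj(E_r) = (1/n)J_n, where E_r are the rank-one spectral projections. -/
/-!
Because the eigenvalues are distinct, `E_s S E_t = 0` for `s ≠ t` whenever `S` commutes with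
`A = Σ λ_r E_r`; sandwiching `S` between two copies of `Σ E_r = 1` then shows that every `E_r`
commutes with the cyclic shift, i.e. is circulant. A circulant matrix acts on each character
`j ↦ ζ^{jk}` by the discrete Fourier transform of its first column at `k`. Hence the Fourier
transforms of the `E_r` are `0`/`1`-valued, nonzero, and sum to `1` at every frequency; `n` of
them on `n` frequencies must each be the indicator of a single frequency. So every `E_r` is a
Fourier projection `z_k z_k†`, all of whose entries have modulus `1/n`.
-/

open Matrix Finset

section Spectral

variable {m ι K : Type*} [Fintype m] [Fintype ι]

theorem sum_smul_mul_eq_smul [CommSemiring K] {E : ι → Matrix m m K}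
    (hEP : ∀ r, E r * E r = E r) (hEO : ∀ r s, r ≠ s → E r * E s = 0) (lam : ι → K) (t : ι) :
    (∑ r, lam r • E r) * E t = lam t • E t := by
  rw [Finset.sum_mul, Finset.sum_eq_single t
    (fun s _ hst => by rw [smul_mul_assoc, hEO s t hst, smul_zero])
    (fun h => absurd (mem_univ t) h), smul_mul_assoc, hEP]

theorem mul_sum_smul_eq_smul [CommSemiring K] {E : ι → Matrix m m K}
    (hEP : ∀ r, E r * E r = E r) (hEO : ∀ r s, r ≠ s → E r * E s = 0) (lam : ι → K) (s : ι) :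
    E s * (∑ r, lam r • E r) = lam s • E s := by
  rw [Finset.mul_sum, Finset.sum_eq_single s
    (fun t _ hts => by rw [mul_smul_comm, hEO s t (Ne.symm hts), smul_zero])
    (fun h => absurd (mem_univ s) h), mul_smul_comm, hEP]

theorem mul_mul_eq_zero_of_commute_sum_smul [Field K] {E : ι → Matrix m m K}
    (hEP : ∀ r, E r * E r = E r) (hEO : ∀ r s, r ≠ s → E r * E s = 0) {lam : ι → K}
    (hlam : Function.Injective lam) {S : Matrix m m K} (hS : Commute (∑ r, lam r • E r) S)
    {s t : ι} (hst : s ≠ t) : E s * S * E t = 0 := by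
  have h : (lam s - lam t) • (E s * S * E t) = 0 := by
    rw [sub_smul, ← smul_mul_assoc, ← smul_mul_assoc, ← mul_sum_smul_eq_smul hEP hEO,
      ← mul_smul_comm, ← sum_smul_mul_eq_smul hEP hEO, mul_assoc (E s), hS.eq, ← mul_assoc,
      ← mul_assoc, sub_self]
  exact (smul_eq_zero.mp h).resolve_left (sub_ne_zero.mpr (hlam.ne hst))

theorem commute_of_commute_sum_smul [DecidableEq m] [Field K] {E : ι → Matrix m m K}
    (hEP : ∀ r, E r * E r = E r) (hEO : ∀ r s, r ≠ s → E r * E s = 0) (hEsum : ∑ r, E r = 1)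
    {lam : ι → K} (hlam : Function.Injective lam) {S : Matrix m m K}
    (hS : Commute (∑ r, lam r • E r) S) (r : ι) : Commute (E r) S := by
  have hleft : S * E r = E r * S * E r := by
    conv_lhs => rw [← one_mul (S * E r), ← hEsum, Finset.sum_mul]
    refine (Finset.sum_eq_single r (fun s _ hsr => ?_) (fun h => absurd (mem_univ r) h)).trans ?_
    · rw [← mul_assoc, mul_mul_eq_zero_of_commute_sum_smul hEP hEO hlam hS hsr]
    · rw [mul_assoc]
  have hright : E r * S = E r * S * E r := by
    conv_lhs => rw [← mul_one (E r * S), ← hEsum, Finset.mul_sum]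
    exact Finset.sum_eq_single r
      (fun t _ htr => mul_mul_eq_zero_of_commute_sum_smul hEP hEO hlam hS htr.symm)
      (fun h => absurd (mem_univ r) h)
  exact hright.trans hleft.symm

end Spectral

theorem exists_eq_single_of_sum_eq_one {ι κ R : Type*} [Fintype ι] [Fintype κ] [DecidableEq κ]
    [CommRing R] [IsDomain R] [CharZero R] {x : ι → κ → R}
    (hidem : ∀ r k, IsIdempotentElem (x r k)) (hsum : ∀ k, ∑ r, x r k = 1) (hne : ∀ r, x r ≠ 0)
    (hcard : Fintype.card κ ≤ Fintype.card ι) (r : ι) : ∃ k, x r = Pi.single k 1 := by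
  classical
  let supp : ι → Finset κ := fun r => univ.filter fun k => x r k = 1
  have hx : ∀ r k, x r k = if k ∈ supp r then 1 else 0 := fun r k => by
    rcases IsIdempotentElem.iff_eq_zero_or_one.mp (hidem r k) with h | h <;> simp [supp, h]
  have hcount : ∑ r, #(supp r) = Fintype.card κ := by
    apply @Nat.cast_injective R
    calc ((∑ r, #(supp r) : ℕ) : R) = ∑ r, ∑ k, x r k := by
          push_cast
          refine Finset.sum_congr rfl fun r _ => ?_
          rw [natCast_card_filter]
          exact Finset.sum_congr rfl fun k _ => by rw [hx r k]; simp [supp]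
      _ = Fintype.card κ := by simp [Finset.sum_comm (f := x), hsum]
  have hpos : ∀ r, 1 ≤ #(supp r) := fun r => by
    obtain ⟨k, hk⟩ := Function.ne_iff.mp (hne r)
    rw [hx r k] at hk
    exact Finset.card_pos.mpr ⟨k, by simpa using hk⟩
  -- the nonempty supports partition `κ`, and there are at least `card κ` of them
  have hone : #(supp r) = 1 := by
    refine ((Finset.sum_eq_sum_iff_of_le fun r _ => hpos r).mp ?_ r (mem_univ r)).symm
    refine le_antisymm (Finset.sum_le_sum fun r _ => hpos r) ?_
    simpa [hcount] using hcard
  obtain ⟨k, hk⟩ := Finset.card_eq_one.mp hone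
  exact ⟨k, funext fun k' => by simp [hx r k', hk, Pi.single_apply]⟩

section CyclicShift

def cyclicShift (n : ℕ) (R : Type*) [Semiring R] : Matrix (ZMod n) (ZMod n) R :=
  of fun i j => if i = j + 1 then 1 else 0

variable {n : ℕ} {R : Type*} [Semiring R]

theorem cyclicShift_mul_apply [NeZero n] (M : Matrix (ZMod n) (ZMod n) R) (i j : ZMod n) :
    (cyclicShift n R * M) i j = M (i - 1) j := by
  simp [cyclicShift, mul_apply, ite_mul, ← sub_eq_iff_eq_add, eq_comm (a := i - 1)]

theorem mul_cyclicShift_apply [NeZero n] (M : Matrix (ZMod n) (ZMod n) R) (i j : ZMod n) :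
    (M * cyclicShift n R) i j = M i (j + 1) := by
  simp [cyclicShift, mul_apply]

theorem eq_circulant_of_commute_cyclicShift [NeZero n] {M : Matrix (ZMod n) (ZMod n) R}
    (hM : Commute M (cyclicShift n R)) : M = circulant fun d => M d 0 := by
  have hstep : ∀ i j, M (i + 1) (j + 1) = M i j := fun i j => by
    simpa [mul_cyclicShift_apply, cyclicShift_mul_apply] using congrFun (congrFun hM.eq (i + 1)) j
  have htranslate : ∀ (k : ℕ) i j, M (i + k) (j + k) = M i j := by
    intro k
    induction k with
    | zero => simp
    | succ k ih => intro i j; simpa [← add_assoc, ih] using hstep (i + k) (j + k)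
  ext i j
  have h := htranslate j.val (i - j) 0
  rwa [ZMod.natCast_zmod_val, sub_add_cancel, zero_add] at h

end CyclicShift

open ZMod

section Fourier

variable {n : ℕ} [NeZero n]

theorem circulant_mulVec_stdAddChar (v : ZMod n → ℂ) (k : ZMod n) :
    circulant v *ᵥ (fun j => stdAddChar (j * k)) = 𝓕 v k • fun j => stdAddChar (j * k) := by
  ext i
  simp only [mulVec, dotProduct, circulant_apply, dft_apply, Pi.smul_apply, smul_eq_mul,
    Finset.sum_mul]
  refine Fintype.sum_equiv (Equiv.subLeft i) _ _ fun j => ?_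
  rw [Equiv.subLeft_apply, mul_right_comm, mul_comm _ (v _), ← AddChar.map_add_eq_mul]
  congr 2
  ring

theorem dft_mul_dft_of_circulant_mul {u v w : ZMod n → ℂ}
    (h : circulant u * circulant v = circulant w) (k : ZMod n) : 𝓕 u k * 𝓕 v k = 𝓕 w k := by
  have := congrFun (congrArg (· *ᵥ fun j => stdAddChar (j * k)) h) 0
  rw [← mulVec_mulVec, circulant_mulVec_stdAddChar, mulVec_smul, circulant_mulVec_stdAddChar,
    circulant_mulVec_stdAddChar] at this
  simpa [mul_comm] using this

theorem sum_dft_eq_one_of_sum_circulant_eq_one {ι : Type*} [Fintype ι] {v : ι → ZMod n → ℂ}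
    (h : ∑ r, circulant (v r) = 1) (k : ZMod n) : ∑ r, 𝓕 (v r) k = 1 := by
  have := congrFun (congrArg (· *ᵥ fun j => stdAddChar (j * k)) h) 0
  rw [sum_mulVec] at this
  simp_rw [circulant_mulVec_stdAddChar] at this
  simpa using this

theorem mul_conj_invDFT_single (k d : ZMod n) :
    𝓕⁻ (Pi.single k 1) d * starRingEnd ℂ (𝓕⁻ (Pi.single k 1) d) = ((n : ℂ)⁻¹) ^ 2 := by
  rw [Complex.mul_conj', invDFT_apply]
  simp [Pi.single_apply, stdAddChar_apply, Circle.norm_coe]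

end Fourier

theorem exists_eq_invDFT_single_of_circulant {n : ℕ} [NeZero n] {ι : Type*} [Fintype ι]
    {v : ι → ZMod n → ℂ} (hidem : ∀ r, circulant (v r) * circulant (v r) = circulant (v r))
    (hsum : ∑ r, circulant (v r) = 1) (hne : ∀ r, v r ≠ 0) (hcard : n ≤ Fintype.card ι) (r : ι) :
    ∃ k, v r = 𝓕⁻ (Pi.single k 1) := by
  obtain ⟨k, hk⟩ := exists_eq_single_of_sum_eq_one (x := fun r => 𝓕 (v r))
    (fun r => dft_mul_dft_of_circulant_mul (hidem r))
    (sum_dft_eq_one_of_sum_circulant_eq_one hsum)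
    (fun r => by simpa using hne r) (by simpa using hcard) r
  exact ⟨k, by rw [← hk, LinearEquiv.symm_apply_apply]⟩

theorem sum_hadamard_map_conj_eq_of_commute_cyclicShift {n : ℕ} [NeZero n] {ι : Type*}
    [Fintype ι] (hcard : Fintype.card ι = n) {lam : ι → ℂ} (hlam : Function.Injective lam)
    {E : ι → Matrix (ZMod n) (ZMod n) ℂ} (hEP : ∀ r, E r * E r = E r)
    (hEO : ∀ r s, r ≠ s → E r * E s = 0) (hEsum : ∑ r, E r = 1) (hEne : ∀ r, E r ≠ 0)
    (hcomm : Commute (∑ r, lam r • E r) (cyclicShift n ℂ)) :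
    ∑ r, E r ⊙ (E r).map (starRingEnd ℂ) = (n : ℂ)⁻¹ • of fun _ _ => 1 := by
  have hcirc : ∀ r, E r = circulant fun d => E r d 0 := fun r =>
    eq_circulant_of_commute_cyclicShift (commute_of_commute_sum_smul hEP hEO hEsum hlam hcomm r)
  choose k hk using exists_eq_invDFT_single_of_circulant (v := fun r d => E r d 0)
    (fun r => by rw [← hcirc]; exact hEP r) (by simpa only [← hcirc] using hEsum)
    (fun r h => hEne r (by rw [hcirc r, h, circulant_zero])) hcard.ge
  ext i j
  have hentry : ∀ r, E r i j = 𝓕⁻ (Pi.single (k r) 1) (i - j) := fun r => by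
    rw [hcirc r, circulant_apply]
    exact congrFun (hk r) (i - j)
  simp only [Matrix.sum_apply, hadamard_apply, map_apply, hentry, mul_conj_invDFT_single,
    sum_const]
  rw [card_univ, hcard, nsmul_eq_mul, Matrix.smul_apply, of_apply, smul_eq_mul, mul_one, sq,
    ← mul_assoc, mul_inv_cancel₀ (NeZero.ne _), one_mul]

theorem cyclicShift_succ_eq_of_val (N : ℕ) :
    cyclicShift (N + 1) ℂ =
      of fun i j : Fin (N + 1) => if (i : ℕ) = ((j : ℕ) + 1) % (N + 1) then (1 : ℂ) else 0 := by
  ext (i : Fin (N + 1)) (j : Fin (N + 1))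
  change (if i = j + 1 then (1 : ℂ) else 0) = _
  simp only [of_apply, Fin.ext_iff, Fin.val_add, Fin.val_one', Nat.add_mod_mod]

theorem stmt16_general {n : ℕ}
    (A : Matrix (Fin n) (Fin n) ℂ)
    (hcirc : A * (Matrix.of fun i j : Fin n => if (i : ℕ) = ((j : ℕ) + 1) % n then (1 : ℂ) else 0) =
      (Matrix.of fun i j : Fin n => if (i : ℕ) = ((j : ℕ) + 1) % n then (1 : ℂ) else 0) * A)
    (lam : Fin n → ℝ) (hlam : Function.Injective lam)
    (E : Fin n → Matrix (Fin n) (Fin n) ℂ)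
    (hEP : ∀ r, E r * E r = E r)
    (hEO : ∀ r s, r ≠ s → E r * E s = 0)
    (hEsum : ∑ r, E r = 1)
    (hEne : ∀ r, E r ≠ 0)
    (hspec : A = ∑ r, (lam r : ℂ) • E r) :
    ∑ r, Matrix.hadamard (E r) ((E r).map (starRingEnd ℂ)) =
      ((n : ℂ))⁻¹ • Matrix.of (fun _ _ : Fin n => (1 : ℂ)) := by
  cases n with
  | zero => exact Subsingleton.elim _ _
  | succ N =>
    -- `ZMod (N + 1)` is `Fin (N + 1)` by definition
    rw [← cyclicShift_succ_eq_of_val, hspec] at hcirc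
    exact sum_hadamard_map_conj_eq_of_commute_cyclicShift (Fintype.card_fin _)
      (Complex.ofReal_injective.comp hlam) hEP hEO hEsum hEne hcirc

/-- a Hermitian circulant `A` (commuting with the cyclic shift) with `n`
distinct eigenvalues has average uniform mixing: `Σ_r E_r ∘ conj(E_r) = (1/n)·J_n`, where
the `E_r` are the (rank-one) spectral projections. -/
theorem stmt16 {n : ℕ} (hn : 0 < n)
    (A : Matrix (Fin n) (Fin n) ℂ) (hA : A.IsHermitian)
    (hcirc : A * (Matrix.of fun i j : Fin n => if (i : ℕ) = ((j : ℕ) + 1) % n then (1 : ℂ) else 0) =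
      (Matrix.of fun i j : Fin n => if (i : ℕ) = ((j : ℕ) + 1) % n then (1 : ℂ) else 0) * A)
    (lam : Fin n → ℝ) (hlam : Function.Injective lam)
    (E : Fin n → Matrix (Fin n) (Fin n) ℂ)
    (hEP : ∀ r, E r * E r = E r) (hEH : ∀ r, (E r).IsHermitian)
    (hEO : ∀ r s, r ≠ s → E r * E s = 0)
    (hEsum : ∑ r, E r = 1)
    (hEne : ∀ r, E r ≠ 0)
    (hspec : A = ∑ r, (lam r : ℂ) • E r) :
    ∑ r, Matrix.hadamard (E r) ((E r).map (starRingEnd ℂ)) =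
      ((n : ℂ))⁻¹ • Matrix.of (fun _ _ : Fin n => (1 : ℂ)) :=
  stmt16_general A hcirc lam hlam E hEP hEO hEsum hEne hspec
end
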